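/- arXiv:2003.03554 — 6 statements merged into one kernel-verified Lean document; each statement's English description precedes it below -/
import Mathlib

section
/- There is no nonzero real-linear functional λ on the real vector space of hermitian n×n complex matrices (n ≥ 2) that is dispersion-free, i.e., satisfies λ(a²) = λ(a)² for every hermitian matrix a. -/
open Matrix Complex

private lemma conjT_std {n : ℕ} (i j : Fin n) (c : ℂ) :
    (Matrix.single i j c)ᴴ = Matrix.single j i (star c) := by
  ext a b
  simp only [Matrix.conjTranspose_apply, Matrix.single, Matrix.of_apply]
  by_cases h1 : j = a <;> by_cases h2 : i = b <;> simp [h1, h2, and_comm]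

private lemma herm_pair {n : ℕ} (i j : Fin n) (c : ℂ) :
    (Matrix.single i j c + Matrix.single j i (star c)).IsHermitian := by
  unfold Matrix.IsHermitian
  rw [Matrix.conjTranspose_add, conjT_std, conjT_std, star_star, add_comm]

private lemma pair_mul {n : ℕ} {i j : Fin n} (h : i ≠ j) (c d e f : ℂ) :
    (Matrix.single i j c + Matrix.single j i d) *
      (Matrix.single i j e + Matrix.single j i f) =
    Matrix.single i i (c * f) + Matrix.single j j (d * e) := by
  rw [add_mul, mul_add, mul_add,
    Matrix.single_mul_single_of_ne (i := i) (j := j) (c := c) (h := Ne.symm h) (d := e),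
    Matrix.single_mul_single_of_ne (i := j) (j := i) (c := d) (h := h) (d := f),
    Matrix.single_mul_single_same (i := i) (j := j) (c := c) (k := i) (d := f),
    Matrix.single_mul_single_same (i := j) (j := i) (c := d) (k := j) (d := e)]
  abel

private lemma diag_mul {n : ℕ} {i j : Fin n} (h : i ≠ j) (c d e f : ℂ) :
    (Matrix.single i i c + Matrix.single j j d) *
      (Matrix.single i i e + Matrix.single j j f) =
    Matrix.single i i (c * e) + Matrix.single j j (d * f) := by
  rw [add_mul, mul_add, mul_add,
    Matrix.single_mul_single_of_ne (i := i) (j := i) (c := c) (h := h) (d := f),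
    Matrix.single_mul_single_of_ne (i := j) (j := j) (c := d) (h := Ne.symm h) (d := e),
    Matrix.single_mul_single_same (i := i) (j := i) (c := c) (k := i) (d := e),
    Matrix.single_mul_single_same (i := j) (j := j) (c := d) (k := j) (d := f)]
  abel

/-- Von Neumann's no-hidden-variables theorem: for `n ≥ 2` there is no
real-linear, dispersion-free functional on the hermitian `n × n` complex
matrices that is nonzero (on some hermitian matrix). -/
theorem no_dispersion_free_linear_functional (n : ℕ) (hn : 2 ≤ n) :
    ¬ ∃ lam : Matrix (Fin n) (Fin n) ℂ → ℝ,
        (∀ (s t : ℝ) (a b : Matrix (Fin n) (Fin n) ℂ),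
          a.IsHermitian → b.IsHermitian →
          lam (s • a + t • b) = s * lam a + t * lam b) ∧
        (∀ a : Matrix (Fin n) (Fin n) ℂ, a.IsHermitian → lam (a * a) = (lam a) ^ 2) ∧
        (∃ a : Matrix (Fin n) (Fin n) ℂ, a.IsHermitian ∧ lam a ≠ 0) := by
  rintro ⟨lam, hlin, hdisp, a, ha, hne⟩
  classical
  -- additivity
  have hadd : ∀ x y : Matrix (Fin n) (Fin n) ℂ, x.IsHermitian → y.IsHermitian →
      lam (x + y) = lam x + lam y := by
    intro x y hx hy
    simpa using hlin 1 1 x y hx hy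
  have lam0 : lam 0 = 0 := by
    simpa using hlin 0 0 1 1 Matrix.isHermitian_one Matrix.isHermitian_one
  -- a*a is hermitian
  have hmulself : ∀ x : Matrix (Fin n) (Fin n) ℂ, x.IsHermitian → (x * x).IsHermitian := by
    intro x hx
    unfold Matrix.IsHermitian
    rw [Matrix.conjTranspose_mul, hx.eq]
  -- lam 1 = 1
  have hone2 : lam 1 = (lam 1) ^ 2 := by
    have := hdisp 1 Matrix.isHermitian_one
    simpa using this
  have lam1 : lam 1 = 1 := by
    have hexp : (a + 1) * (a + 1) = ((a * a + a) + a) + 1 := by noncomm_ring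
    have h1 : lam ((a + 1) * (a + 1)) = (lam a + lam 1) ^ 2 := by
      rw [hdisp _ (ha.add Matrix.isHermitian_one),
        hadd a 1 ha Matrix.isHermitian_one]
    have h2 : lam (((a * a + a) + a) + 1) = (lam a) ^ 2 + lam a + lam a + lam 1 := by
      rw [hadd _ _ (((hmulself a ha).add ha).add ha) Matrix.isHermitian_one,
        hadd _ _ ((hmulself a ha).add ha) ha,
        hadd _ _ (hmulself a ha) ha, hdisp a ha]
    rw [hexp, h2] at h1
    have key : lam a * lam 1 = lam a * 1 := by nlinarith [h1, hone2]
    exact mul_left_cancel₀ hne key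
  -- lam of diagonal basis matrices is 0 or 1
  set E : Fin n → Fin n → Matrix (Fin n) (Fin n) ℂ :=
    fun i j => Matrix.single i j 1 with hE
  have hEherm : ∀ k, (E k k).IsHermitian := by
    intro k
    unfold Matrix.IsHermitian
    rw [hE]
    simp only []
    rw [conjT_std]
    norm_num
  have hEsq : ∀ k, lam (E k k) = (lam (E k k)) ^ 2 := by
    intro k
    have hm : E k k * E k k = E k k := by
      rw [hE]
      simp only []
      rw [Matrix.single_mul_single_same (i := k) (j := k) (c := 1) (k := k) (d := 1), one_mul]
    rw [← hdisp _ (hEherm k), hm]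
  -- hermitian partial sums
  have hsumherm : ∀ s : Finset (Fin n), (∑ k ∈ s, E k k).IsHermitian := by
    intro s
    unfold Matrix.IsHermitian
    rw [Matrix.conjTranspose_sum]
    exact Finset.sum_congr rfl fun k _ => (hEherm k).eq
  have hsum : ∀ s : Finset (Fin n), lam (∑ k ∈ s, E k k) = ∑ k ∈ s, lam (E k k) := by
    intro s
    induction s using Finset.induction_on with
    | empty => simpa using lam0
    | @insert k s hk ih =>
      rw [Finset.sum_insert hk, Finset.sum_insert hk,
        hadd _ _ (hEherm k) (hsumherm s), ih]
  -- 1 = sum of diagonal basis matrices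
  have hone_eq : (1 : Matrix (Fin n) (Fin n) ℂ) = ∑ k, E k k := by
    ext p q
    simp only [Matrix.sum_apply, hE, Matrix.single, Matrix.one_apply, Matrix.of_apply,
      ite_and]
    by_cases h : p = q <;> simp [h, Finset.sum_ite_eq]
  have hsum1 : ∑ k, lam (E k k) = 1 := by
    rw [← hsum, ← hone_eq, lam1]
  -- get i with lam (E i i) = 1
  obtain ⟨i, -, hi0⟩ : ∃ k ∈ Finset.univ, lam (E k k) ≠ 0 :=
    Finset.exists_ne_zero_of_sum_ne_zero (by rw [hsum1]; norm_num)
  have hi1 : lam (E i i) = 1 := by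
    have hx := hEsq i
    have hz : lam (E i i) * (lam (E i i) - 1) = 0 := by nlinarith [hx]
    rcases mul_eq_zero.mp hz with h | h
    · exact absurd h hi0
    · linarith
  obtain ⟨j, hji⟩ : ∃ j : Fin n, j ≠ i :=
    Fintype.exists_ne_of_one_lt_card (by simp; omega) i
  have hij : i ≠ j := hji.symm
  -- the key matrices
  set X : Matrix (Fin n) (Fin n) ℂ :=
    Matrix.single i j 1 + Matrix.single j i 1 with hXdef
  set Y : Matrix (Fin n) (Fin n) ℂ :=
    Matrix.single i j Complex.I + Matrix.single j i (-Complex.I) with hYdef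
  set W : Matrix (Fin n) (Fin n) ℂ :=
    Matrix.single i j (1 + Complex.I) + Matrix.single j i (1 - Complex.I)
    with hWdef
  set P : Matrix (Fin n) (Fin n) ℂ := E i i + E j j with hPdef
  have hXh : X.IsHermitian := by
    have := herm_pair i j (1 : ℂ)
    simpa [hXdef] using this
  have hYh : Y.IsHermitian := by
    have := herm_pair i j Complex.I
    simpa [hYdef, Complex.star_def, Complex.conj_I] using this
  have hWh : W.IsHermitian := by
    have := herm_pair i j (1 + Complex.I)
    simpa [hWdef, Complex.star_def, map_add, Complex.conj_I, sub_eq_add_neg] using this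
  have hPh : P.IsHermitian := (hEherm i).add (hEherm j)
  -- products
  have hXX : X * X = P := by
    rw [hXdef, pair_mul hij, hPdef, hE]
    norm_num
  have hYY : Y * Y = P := by
    rw [hYdef, pair_mul hij, hPdef, hE]
    simp only []
    rw [show Complex.I * -Complex.I = 1 by simp [Complex.I_mul_I],
      show -Complex.I * Complex.I = 1 by simp [Complex.I_mul_I]]
  have hWW : W * W = P + P := by
    rw [hWdef, pair_mul hij, hPdef, hE]
    simp only []
    rw [show (1 + Complex.I) * (1 - Complex.I) = 1 + 1 by
        ring_nf; rw [Complex.I_sq]; ring,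
      show (1 - Complex.I) * (1 + Complex.I) = 1 + 1 by
        ring_nf; rw [Complex.I_sq]; ring]
    rw [Matrix.single_add, Matrix.single_add]
    abel
  have hPP : P * P = P := by
    rw [hPdef, hE]
    simp only []
    rw [diag_mul hij, one_mul]
  have hWXY : W = X + Y := by
    rw [hWdef, hXdef, hYdef, Matrix.single_add,
      show (1 : ℂ) - Complex.I = 1 + (-Complex.I) by ring, Matrix.single_add]
    abel
  -- lam values
  have hlamP : lam P = 1 := by
    have h1 : lam P = (lam P) ^ 2 := by rw [← hdisp P hPh, hPP]
    have h2 : lam P = 1 + lam (E j j) := by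
      rw [hPdef, hadd _ _ (hEherm i) (hEherm j), hi1]
    nlinarith [hEsq j, h1, h2]
  have hX1 : (lam X) ^ 2 = 1 := by rw [← hdisp X hXh, hXX, hlamP]
  have hY1 : (lam Y) ^ 2 = 1 := by rw [← hdisp Y hYh, hYY, hlamP]
  have hW2 : (lam X + lam Y) ^ 2 = 2 := by
    rw [← hadd _ _ hXh hYh, ← hWXY, ← hdisp W hWh, hWW,
      hadd _ _ hPh hPh, hlamP]
    norm_num
  nlinarith [hX1, hY1, hW2, sq_nonneg (lam X * lam Y - 1), sq_nonneg (lam X * lam Y + 1)]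
end

section
/- Quantum violation of the CHSH bound: there exist a state vector ψ in ℂ²⊗ℂ² and self-adjoint operators A₁, A₂ on the first factor and B₁, B₂ on the second factor, each with spectrum contained in {−1, 1}, such that ⟨ψ, (A₁⊗B₁ + A₁⊗B₂ + A₂⊗B₁ − A₂⊗B₂)ψ⟩ = 2√2 > 2. -/
open Matrix
open scoped Kronecker ComplexConjugate

noncomputable def cc : ℂ := (Real.sqrt 2 : ℝ)⁻¹

lemma star_cc : star cc = cc := by simp [cc]

lemma star_cc' : (starRingEnd ℂ) cc = cc := star_cc

lemma abs_cc : ‖cc‖ = (Real.sqrt 2)⁻¹ := by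
  unfold cc
  rw [norm_inv, Complex.norm_real, Real.norm_of_nonneg (Real.sqrt_nonneg 2)]

lemma cc_sq : cc * cc = 1/2 := by
  unfold cc
  rw [← mul_inv, ← Complex.ofReal_mul,
    Real.mul_self_sqrt (by norm_num : (0:ℝ) ≤ 2)]
  norm_num

lemma four_cc : (2:ℂ) * (Real.sqrt 2 : ℝ) = 4 * cc := by
  unfold cc
  have h : ((Real.sqrt 2 : ℝ) : ℂ) ≠ 0 := by
    simp [Real.sqrt_ne_zero']
  field_simp
  rw [← Complex.ofReal_pow, Real.sq_sqrt (by norm_num : (0:ℝ) ≤ 2)]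
  norm_num

/-- Quantum violation of the CHSH bound: there exist a unit vector
`ψ ∈ ℂ² ⊗ ℂ²` (modelled as `Fin 2 × Fin 2 → ℂ`) and self-adjoint involutions
(±1-valued observables) `A₁, A₂` and `B₁, B₂` such that the CHSH correlation
`⟨ψ, (A₁⊗B₁ + A₁⊗B₂ + A₂⊗B₁ − A₂⊗B₂)ψ⟩` equals `2√2 > 2`. -/
theorem chsh_quantum_violation :
    ∃ (ψ : Fin 2 × Fin 2 → ℂ) (A₁ A₂ B₁ B₂ : Matrix (Fin 2) (Fin 2) ℂ),
      (∑ i, ‖ψ i‖ ^ 2 = 1) ∧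
      A₁.IsHermitian ∧ A₂.IsHermitian ∧ B₁.IsHermitian ∧ B₂.IsHermitian ∧
      A₁ * A₁ = 1 ∧ A₂ * A₂ = 1 ∧ B₁ * B₁ = 1 ∧ B₂ * B₂ = 1 ∧
      (∑ i, conj (ψ i) *
        ((A₁ ⊗ₖ B₁ + A₁ ⊗ₖ B₂ + A₂ ⊗ₖ B₁ - A₂ ⊗ₖ B₂) *ᵥ ψ) i)
        = (2 * Real.sqrt 2 : ℝ) ∧
      (2 : ℝ) < 2 * Real.sqrt 2 := by
  refine ⟨fun p => ![![0, cc], ![-cc, 0]] p.1 p.2,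
    !![1,0;0,-1], !![0,1;1,0], cc • !![-1,-1;-1,1], cc • !![-1,1;1,1],
    ?_, ?_, ?_, ?_, ?_, ?_, ?_, ?_, ?_, ?_, ?_⟩
  · simp only [Fintype.sum_prod_type, Fin.sum_univ_two]
    norm_num [abs_cc]
  · ext i j; fin_cases i <;> fin_cases j <;> simp [Matrix.conjTranspose_apply]
  · ext i j; fin_cases i <;> fin_cases j <;> simp [Matrix.conjTranspose_apply]
  · ext i j; fin_cases i <;> fin_cases j <;>
      simp [Matrix.conjTranspose_apply, star_cc]
  · ext i j; fin_cases i <;> fin_cases j <;>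
      simp [Matrix.conjTranspose_apply, star_cc]
  · ext i j; fin_cases i <;> fin_cases j <;>
      simp [Matrix.mul_apply, Fin.sum_univ_two, Matrix.one_apply]
  · ext i j; fin_cases i <;> fin_cases j <;>
      simp [Matrix.mul_apply, Fin.sum_univ_two, Matrix.one_apply]
  · ext i j; fin_cases i <;> fin_cases j <;>
      simp [Matrix.mul_apply, Fin.sum_univ_two, Matrix.one_apply] <;>
      linear_combination 2 * cc_sq
  · ext i j; fin_cases i <;> fin_cases j <;>
      simp [Matrix.mul_apply, Fin.sum_univ_two, Matrix.one_apply] <;>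
      linear_combination 2 * cc_sq
  · simp only [Fintype.sum_prod_type, Fin.sum_univ_two, Matrix.mulVec,
      dotProduct, Matrix.add_apply, Matrix.sub_apply,
      Matrix.kroneckerMap_apply, Matrix.smul_apply]
    norm_num [star_cc']
    rw [show ((2:ℂ) * (Real.sqrt 2 : ℝ)) = 4 * cc from four_cc]
    linear_combination (8 * cc) * cc_sq
  · nlinarith [Real.sq_sqrt (by norm_num : (0:ℝ) ≤ 2), Real.sqrt_nonneg 2]
end

section
/- Kochen–Specker coloring obstruction in dimension 3: there is no function C from the set of all unit vectors in ℝ³ to {0,1} such that for every orthonormal basis (e₁, e₂, e₃) of ℝ³ exactly one of C(e₁), C(e₂), C(e₃) equals 1. -/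
open scoped RealInnerProductSpace

noncomputable def kv (a b c : ℝ) : EuclideanSpace ℝ (Fin 3) := WithLp.toLp 2 ![a,b,c]

lemma inner_kv (a b c d e f : ℝ) : ⟪kv a b c, kv d e f⟫ = a*d + b*e + c*f := by
  simp [kv, PiLp.inner_apply, Fin.sum_univ_three]; ring

lemma orthonormal_triple {a b c : EuclideanSpace ℝ (Fin 3)}
    (haa : ⟪a,a⟫ = 1) (hbb : ⟪b,b⟫ = 1) (hcc : ⟪c,c⟫ = 1)
    (hab : ⟪a,b⟫ = 0) (hac : ⟪a,c⟫ = 0) (hbc : ⟪b,c⟫ = 0) :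
    Orthonormal ℝ ![a,b,c] := by
  rw [orthonormal_iff_ite]
  intro i j
  fin_cases i <;> fin_cases j <;>
    simp_all [real_inner_comm a b, real_inner_comm a c, real_inner_comm b c]

lemma ks_or {C : EuclideanSpace ℝ (Fin 3) → Bool}
    (hC : ∀ e : Fin 3 → EuclideanSpace ℝ (Fin 3),
      Orthonormal ℝ e → ∃! i : Fin 3, C (e i) = true)
    {a b c : EuclideanSpace ℝ (Fin 3)}
    (haa : ⟪a,a⟫ = 1) (hbb : ⟪b,b⟫ = 1) (hcc : ⟪c,c⟫ = 1)
    (hab : ⟪a,b⟫ = 0) (hac : ⟪a,c⟫ = 0) (hbc : ⟪b,c⟫ = 0) :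
    C a = true ∨ C b = true ∨ C c = true := by
  obtain ⟨i, hi, -⟩ := hC ![a,b,c] (orthonormal_triple haa hbb hcc hab hac hbc)
  fin_cases i
  · exact Or.inl hi
  · exact Or.inr (Or.inl hi)
  · exact Or.inr (Or.inr hi)

lemma cross_orthonormal (a0 a1 a2 b0 b1 b2 : ℝ)
    (haa : a0*a0 + a1*a1 + a2*a2 = 1) (hbb : b0*b0 + b1*b1 + b2*b2 = 1)
    (hab : a0*b0 + a1*b1 + a2*b2 = 0) :
    Orthonormal ℝ ![kv a0 a1 a2, kv b0 b1 b2,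
      kv (a1*b2 - a2*b1) (a2*b0 - a0*b2) (a0*b1 - a1*b0)] := by
  refine orthonormal_triple ?_ ?_ ?_ ?_ ?_ ?_ <;> rw [inner_kv]
  · exact haa
  · exact hbb
  · linear_combination (b0*b0 + b1*b1 + b2*b2) * haa + hbb
      - (a0*b0 + a1*b1 + a2*b2) * hab
  · exact hab
  · ring
  · ring

lemma ks_pair {C : EuclideanSpace ℝ (Fin 3) → Bool}
    (hC : ∀ e : Fin 3 → EuclideanSpace ℝ (Fin 3),
      Orthonormal ℝ e → ∃! i : Fin 3, C (e i) = true)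
    {a b : EuclideanSpace ℝ (Fin 3)}
    (haa : ⟪a,a⟫ = 1) (hbb : ⟪b,b⟫ = 1) (hab : ⟪a,b⟫ = 0)
    (ha : C a = true) (hb : C b = true) : False := by
  have ea : a = kv (a 0) (a 1) (a 2) := by
    refine PiLp.ext fun i => ?_; fin_cases i <;> rfl
  have eb : b = kv (b 0) (b 1) (b 2) := by
    refine PiLp.ext fun i => ?_; fin_cases i <;> rfl
  have haa' := haa; rw [ea, inner_kv] at haa'
  have hbb' := hbb; rw [eb, inner_kv] at hbb'
  have hab' := hab; rw [ea, eb, inner_kv] at hab'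
  obtain ⟨i, -, hu⟩ := hC _
    (cross_orthonormal (a 0) (a 1) (a 2) (b 0) (b 1) (b 2) haa' hbb' hab')
  have h0 : (0 : Fin 3) = i := hu 0 (by simpa using (ea ▸ ha))
  have h1 : (1 : Fin 3) = i := hu 1 (by simpa using (eb ▸ hb))
  rw [← h0] at h1
  exact absurd h1 (by decide)

noncomputable def ksv0 : EuclideanSpace ℝ (Fin 3) := kv (0:ℝ) (0:ℝ) (1 : ℝ)
noncomputable def ksv1 : EuclideanSpace ℝ (Fin 3) := kv (0:ℝ) ((1/3)*Real.sqrt 3 : ℝ) ((-1/3)*(Real.sqrt 2*Real.sqrt 3) : ℝ)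
noncomputable def ksv2 : EuclideanSpace ℝ (Fin 3) := kv (0:ℝ) ((1/2)*Real.sqrt 2 : ℝ) ((-1/2)*Real.sqrt 2 : ℝ)
noncomputable def ksv3 : EuclideanSpace ℝ (Fin 3) := kv (0:ℝ) (1 : ℝ) (0:ℝ)
noncomputable def ksv4 : EuclideanSpace ℝ (Fin 3) := kv (0:ℝ) ((1/2)*Real.sqrt 2 : ℝ) ((1/2)*Real.sqrt 2 : ℝ)
noncomputable def ksv5 : EuclideanSpace ℝ (Fin 3) := kv (0:ℝ) ((1/3)*Real.sqrt 3 : ℝ) ((1/3)*(Real.sqrt 2*Real.sqrt 3) : ℝ)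
noncomputable def ksv6 : EuclideanSpace ℝ (Fin 3) := kv (0:ℝ) ((1/3)*(Real.sqrt 2*Real.sqrt 3) : ℝ) ((-1/3)*Real.sqrt 3 : ℝ)
noncomputable def ksv7 : EuclideanSpace ℝ (Fin 3) := kv (0:ℝ) ((1/3)*(Real.sqrt 2*Real.sqrt 3) : ℝ) ((1/3)*Real.sqrt 3 : ℝ)
noncomputable def ksv8 : EuclideanSpace ℝ (Fin 3) := kv ((1/2) : ℝ) ((-1/2)*Real.sqrt 2 : ℝ) ((-1/2) : ℝ)
noncomputable def ksv9 : EuclideanSpace ℝ (Fin 3) := kv ((1/3)*Real.sqrt 3 : ℝ) ((-1/3)*(Real.sqrt 2*Real.sqrt 3) : ℝ) (0:ℝ)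
noncomputable def ksv10 : EuclideanSpace ℝ (Fin 3) := kv ((1/2) : ℝ) ((-1/2)*Real.sqrt 2 : ℝ) ((1/2) : ℝ)
noncomputable def ksv11 : EuclideanSpace ℝ (Fin 3) := kv ((1/2) : ℝ) ((-1/2) : ℝ) ((-1/2)*Real.sqrt 2 : ℝ)
noncomputable def ksv12 : EuclideanSpace ℝ (Fin 3) := kv ((1/2)*Real.sqrt 2 : ℝ) ((-1/2)*Real.sqrt 2 : ℝ) (0:ℝ)
noncomputable def ksv13 : EuclideanSpace ℝ (Fin 3) := kv ((1/2) : ℝ) ((-1/2) : ℝ) ((1/2)*Real.sqrt 2 : ℝ)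
noncomputable def ksv14 : EuclideanSpace ℝ (Fin 3) := kv ((1/3)*Real.sqrt 3 : ℝ) (0:ℝ) ((-1/3)*(Real.sqrt 2*Real.sqrt 3) : ℝ)
noncomputable def ksv15 : EuclideanSpace ℝ (Fin 3) := kv ((1/2)*Real.sqrt 2 : ℝ) (0:ℝ) ((-1/2)*Real.sqrt 2 : ℝ)
noncomputable def ksv16 : EuclideanSpace ℝ (Fin 3) := kv (1 : ℝ) (0:ℝ) (0:ℝ)
noncomputable def ksv17 : EuclideanSpace ℝ (Fin 3) := kv ((1/2)*Real.sqrt 2 : ℝ) (0:ℝ) ((1/2)*Real.sqrt 2 : ℝ)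
noncomputable def ksv18 : EuclideanSpace ℝ (Fin 3) := kv ((1/3)*Real.sqrt 3 : ℝ) (0:ℝ) ((1/3)*(Real.sqrt 2*Real.sqrt 3) : ℝ)
noncomputable def ksv19 : EuclideanSpace ℝ (Fin 3) := kv ((1/2) : ℝ) ((1/2) : ℝ) ((-1/2)*Real.sqrt 2 : ℝ)
noncomputable def ksv20 : EuclideanSpace ℝ (Fin 3) := kv ((1/2)*Real.sqrt 2 : ℝ) ((1/2)*Real.sqrt 2 : ℝ) (0:ℝ)
noncomputable def ksv21 : EuclideanSpace ℝ (Fin 3) := kv ((1/2) : ℝ) ((1/2) : ℝ) ((1/2)*Real.sqrt 2 : ℝ)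
noncomputable def ksv22 : EuclideanSpace ℝ (Fin 3) := kv ((1/2) : ℝ) ((1/2)*Real.sqrt 2 : ℝ) ((-1/2) : ℝ)
noncomputable def ksv23 : EuclideanSpace ℝ (Fin 3) := kv ((1/3)*Real.sqrt 3 : ℝ) ((1/3)*(Real.sqrt 2*Real.sqrt 3) : ℝ) (0:ℝ)
noncomputable def ksv24 : EuclideanSpace ℝ (Fin 3) := kv ((1/2) : ℝ) ((1/2)*Real.sqrt 2 : ℝ) ((1/2) : ℝ)
noncomputable def ksv25 : EuclideanSpace ℝ (Fin 3) := kv ((1/2)*Real.sqrt 2 : ℝ) ((-1/2) : ℝ) ((-1/2) : ℝ)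
noncomputable def ksv26 : EuclideanSpace ℝ (Fin 3) := kv ((1/3)*(Real.sqrt 2*Real.sqrt 3) : ℝ) ((-1/3)*Real.sqrt 3 : ℝ) (0:ℝ)
noncomputable def ksv27 : EuclideanSpace ℝ (Fin 3) := kv ((1/2)*Real.sqrt 2 : ℝ) ((-1/2) : ℝ) ((1/2) : ℝ)
noncomputable def ksv28 : EuclideanSpace ℝ (Fin 3) := kv ((1/3)*(Real.sqrt 2*Real.sqrt 3) : ℝ) (0:ℝ) ((-1/3)*Real.sqrt 3 : ℝ)
noncomputable def ksv29 : EuclideanSpace ℝ (Fin 3) := kv ((1/3)*(Real.sqrt 2*Real.sqrt 3) : ℝ) (0:ℝ) ((1/3)*Real.sqrt 3 : ℝ)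
noncomputable def ksv30 : EuclideanSpace ℝ (Fin 3) := kv ((1/2)*Real.sqrt 2 : ℝ) ((1/2) : ℝ) ((-1/2) : ℝ)
noncomputable def ksv31 : EuclideanSpace ℝ (Fin 3) := kv ((1/3)*(Real.sqrt 2*Real.sqrt 3) : ℝ) ((1/3)*Real.sqrt 3 : ℝ) (0:ℝ)
noncomputable def ksv32 : EuclideanSpace ℝ (Fin 3) := kv ((1/2)*Real.sqrt 2 : ℝ) ((1/2) : ℝ) ((1/2) : ℝ)

/-- Kochen–Specker coloring obstruction in dimension 3: there is no
`{0,1}`-coloring of the unit vectors of `ℝ³` such that every orthonormal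
basis contains exactly one vector colored `1` (`true`). -/
theorem kochen_specker_no_coloring :
    ¬ ∃ C : EuclideanSpace ℝ (Fin 3) → Bool,
        ∀ e : Fin 3 → EuclideanSpace ℝ (Fin 3),
          Orthonormal ℝ e → ∃! i : Fin 3, C (e i) = true := by
  rintro ⟨C, hC⟩
  have h2 : Real.sqrt 2 * Real.sqrt 2 = 2 := Real.mul_self_sqrt (by norm_num)
  have h3 : Real.sqrt 3 * Real.sqrt 3 = 3 := Real.mul_self_sqrt (by norm_num)
  have n0 : ⟪ksv0, ksv0⟫ = 1 := by
    simp only [ksv0]; rw [inner_kv]; ring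
  have n1 : ⟪ksv1, ksv1⟫ = 1 := by
    simp only [ksv1]; rw [inner_kv]; linear_combination ((1/9)*Real.sqrt 3*Real.sqrt 3 : ℝ) * h2 + ((1/3) : ℝ) * h3
  have n2 : ⟪ksv2, ksv2⟫ = 1 := by
    simp only [ksv2]; rw [inner_kv]; linear_combination ((1/2) : ℝ) * h2
  have n3 : ⟪ksv3, ksv3⟫ = 1 := by
    simp only [ksv3]; rw [inner_kv]; ring
  have n4 : ⟪ksv4, ksv4⟫ = 1 := by
    simp only [ksv4]; rw [inner_kv]; linear_combination ((1/2) : ℝ) * h2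
  have n5 : ⟪ksv5, ksv5⟫ = 1 := by
    simp only [ksv5]; rw [inner_kv]; linear_combination ((1/9)*Real.sqrt 3*Real.sqrt 3 : ℝ) * h2 + ((1/3) : ℝ) * h3
  have n6 : ⟪ksv6, ksv6⟫ = 1 := by
    simp only [ksv6]; rw [inner_kv]; linear_combination ((1/9)*Real.sqrt 3*Real.sqrt 3 : ℝ) * h2 + ((1/3) : ℝ) * h3
  have n7 : ⟪ksv7, ksv7⟫ = 1 := by
    simp only [ksv7]; rw [inner_kv]; linear_combination ((1/9)*Real.sqrt 3*Real.sqrt 3 : ℝ) * h2 + ((1/3) : ℝ) * h3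
  have n8 : ⟪ksv8, ksv8⟫ = 1 := by
    simp only [ksv8]; rw [inner_kv]; linear_combination ((1/4) : ℝ) * h2
  have n9 : ⟪ksv9, ksv9⟫ = 1 := by
    simp only [ksv9]; rw [inner_kv]; linear_combination ((1/9)*Real.sqrt 3*Real.sqrt 3 : ℝ) * h2 + ((1/3) : ℝ) * h3
  have n10 : ⟪ksv10, ksv10⟫ = 1 := by
    simp only [ksv10]; rw [inner_kv]; linear_combination ((1/4) : ℝ) * h2
  have n11 : ⟪ksv11, ksv11⟫ = 1 := by
    simp only [ksv11]; rw [inner_kv]; linear_combination ((1/4) : ℝ) * h2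
  have n12 : ⟪ksv12, ksv12⟫ = 1 := by
    simp only [ksv12]; rw [inner_kv]; linear_combination ((1/2) : ℝ) * h2
  have n13 : ⟪ksv13, ksv13⟫ = 1 := by
    simp only [ksv13]; rw [inner_kv]; linear_combination ((1/4) : ℝ) * h2
  have n14 : ⟪ksv14, ksv14⟫ = 1 := by
    simp only [ksv14]; rw [inner_kv]; linear_combination ((1/9)*Real.sqrt 3*Real.sqrt 3 : ℝ) * h2 + ((1/3) : ℝ) * h3
  have n15 : ⟪ksv15, ksv15⟫ = 1 := by
    simp only [ksv15]; rw [inner_kv]; linear_combination ((1/2) : ℝ) * h2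
  have n16 : ⟪ksv16, ksv16⟫ = 1 := by
    simp only [ksv16]; rw [inner_kv]; ring
  have n17 : ⟪ksv17, ksv17⟫ = 1 := by
    simp only [ksv17]; rw [inner_kv]; linear_combination ((1/2) : ℝ) * h2
  have n18 : ⟪ksv18, ksv18⟫ = 1 := by
    simp only [ksv18]; rw [inner_kv]; linear_combination ((1/9)*Real.sqrt 3*Real.sqrt 3 : ℝ) * h2 + ((1/3) : ℝ) * h3
  have n19 : ⟪ksv19, ksv19⟫ = 1 := by
    simp only [ksv19]; rw [inner_kv]; linear_combination ((1/4) : ℝ) * h2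
  have n20 : ⟪ksv20, ksv20⟫ = 1 := by
    simp only [ksv20]; rw [inner_kv]; linear_combination ((1/2) : ℝ) * h2
  have n21 : ⟪ksv21, ksv21⟫ = 1 := by
    simp only [ksv21]; rw [inner_kv]; linear_combination ((1/4) : ℝ) * h2
  have n22 : ⟪ksv22, ksv22⟫ = 1 := by
    simp only [ksv22]; rw [inner_kv]; linear_combination ((1/4) : ℝ) * h2
  have n23 : ⟪ksv23, ksv23⟫ = 1 := by
    simp only [ksv23]; rw [inner_kv]; linear_combination ((1/9)*Real.sqrt 3*Real.sqrt 3 : ℝ) * h2 + ((1/3) : ℝ) * h3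
  have n24 : ⟪ksv24, ksv24⟫ = 1 := by
    simp only [ksv24]; rw [inner_kv]; linear_combination ((1/4) : ℝ) * h2
  have n25 : ⟪ksv25, ksv25⟫ = 1 := by
    simp only [ksv25]; rw [inner_kv]; linear_combination ((1/4) : ℝ) * h2
  have n26 : ⟪ksv26, ksv26⟫ = 1 := by
    simp only [ksv26]; rw [inner_kv]; linear_combination ((1/9)*Real.sqrt 3*Real.sqrt 3 : ℝ) * h2 + ((1/3) : ℝ) * h3
  have n27 : ⟪ksv27, ksv27⟫ = 1 := by
    simp only [ksv27]; rw [inner_kv]; linear_combination ((1/4) : ℝ) * h2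
  have n28 : ⟪ksv28, ksv28⟫ = 1 := by
    simp only [ksv28]; rw [inner_kv]; linear_combination ((1/9)*Real.sqrt 3*Real.sqrt 3 : ℝ) * h2 + ((1/3) : ℝ) * h3
  have n29 : ⟪ksv29, ksv29⟫ = 1 := by
    simp only [ksv29]; rw [inner_kv]; linear_combination ((1/9)*Real.sqrt 3*Real.sqrt 3 : ℝ) * h2 + ((1/3) : ℝ) * h3
  have n30 : ⟪ksv30, ksv30⟫ = 1 := by
    simp only [ksv30]; rw [inner_kv]; linear_combination ((1/4) : ℝ) * h2
  have n31 : ⟪ksv31, ksv31⟫ = 1 := by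
    simp only [ksv31]; rw [inner_kv]; linear_combination ((1/9)*Real.sqrt 3*Real.sqrt 3 : ℝ) * h2 + ((1/3) : ℝ) * h3
  have n32 : ⟪ksv32, ksv32⟫ = 1 := by
    simp only [ksv32]; rw [inner_kv]; linear_combination ((1/4) : ℝ) * h2
  have o0_3 : ⟪ksv0, ksv3⟫ = 0 := by
    simp only [ksv0, ksv3]; rw [inner_kv]; ring
  have o0_9 : ⟪ksv0, ksv9⟫ = 0 := by
    simp only [ksv0, ksv9]; rw [inner_kv]; ring
  have o0_12 : ⟪ksv0, ksv12⟫ = 0 := by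
    simp only [ksv0, ksv12]; rw [inner_kv]; ring
  have o0_16 : ⟪ksv0, ksv16⟫ = 0 := by
    simp only [ksv0, ksv16]; rw [inner_kv]; ring
  have o0_20 : ⟪ksv0, ksv20⟫ = 0 := by
    simp only [ksv0, ksv20]; rw [inner_kv]; ring
  have o0_23 : ⟪ksv0, ksv23⟫ = 0 := by
    simp only [ksv0, ksv23]; rw [inner_kv]; ring
  have o0_26 : ⟪ksv0, ksv26⟫ = 0 := by
    simp only [ksv0, ksv26]; rw [inner_kv]; ring
  have o0_31 : ⟪ksv0, ksv31⟫ = 0 := by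
    simp only [ksv0, ksv31]; rw [inner_kv]; ring
  have o1_7 : ⟪ksv1, ksv7⟫ = 0 := by
    simp only [ksv1, ksv7]; rw [inner_kv]; ring
  have o1_8 : ⟪ksv1, ksv8⟫ = 0 := by
    simp only [ksv1, ksv8]; rw [inner_kv]; ring
  have o1_16 : ⟪ksv1, ksv16⟫ = 0 := by
    simp only [ksv1, ksv16]; rw [inner_kv]; ring
  have o1_24 : ⟪ksv1, ksv24⟫ = 0 := by
    simp only [ksv1, ksv24]; rw [inner_kv]; ring
  have o2_4 : ⟪ksv2, ksv4⟫ = 0 := by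
    simp only [ksv2, ksv4]; rw [inner_kv]; ring
  have o2_16 : ⟪ksv2, ksv16⟫ = 0 := by
    simp only [ksv2, ksv16]; rw [inner_kv]; ring
  have o2_25 : ⟪ksv2, ksv25⟫ = 0 := by
    simp only [ksv2, ksv25]; rw [inner_kv]; ring
  have o2_32 : ⟪ksv2, ksv32⟫ = 0 := by
    simp only [ksv2, ksv32]; rw [inner_kv]; ring
  have o3_14 : ⟪ksv3, ksv14⟫ = 0 := by
    simp only [ksv3, ksv14]; rw [inner_kv]; ring
  have o3_15 : ⟪ksv3, ksv15⟫ = 0 := by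
    simp only [ksv3, ksv15]; rw [inner_kv]; ring
  have o3_16 : ⟪ksv3, ksv16⟫ = 0 := by
    simp only [ksv3, ksv16]; rw [inner_kv]; ring
  have o3_17 : ⟪ksv3, ksv17⟫ = 0 := by
    simp only [ksv3, ksv17]; rw [inner_kv]; ring
  have o3_18 : ⟪ksv3, ksv18⟫ = 0 := by
    simp only [ksv3, ksv18]; rw [inner_kv]; ring
  have o3_28 : ⟪ksv3, ksv28⟫ = 0 := by
    simp only [ksv3, ksv28]; rw [inner_kv]; ring
  have o3_29 : ⟪ksv3, ksv29⟫ = 0 := by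
    simp only [ksv3, ksv29]; rw [inner_kv]; ring
  have o4_16 : ⟪ksv4, ksv16⟫ = 0 := by
    simp only [ksv4, ksv16]; rw [inner_kv]; ring
  have o4_27 : ⟪ksv4, ksv27⟫ = 0 := by
    simp only [ksv4, ksv27]; rw [inner_kv]; ring
  have o4_30 : ⟪ksv4, ksv30⟫ = 0 := by
    simp only [ksv4, ksv30]; rw [inner_kv]; ring
  have o5_6 : ⟪ksv5, ksv6⟫ = 0 := by
    simp only [ksv5, ksv6]; rw [inner_kv]; ring
  have o5_10 : ⟪ksv5, ksv10⟫ = 0 := by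
    simp only [ksv5, ksv10]; rw [inner_kv]; ring
  have o5_16 : ⟪ksv5, ksv16⟫ = 0 := by
    simp only [ksv5, ksv16]; rw [inner_kv]; ring
  have o5_22 : ⟪ksv5, ksv22⟫ = 0 := by
    simp only [ksv5, ksv22]; rw [inner_kv]; ring
  have o6_11 : ⟪ksv6, ksv11⟫ = 0 := by
    simp only [ksv6, ksv11]; rw [inner_kv]; ring
  have o6_16 : ⟪ksv6, ksv16⟫ = 0 := by
    simp only [ksv6, ksv16]; rw [inner_kv]; ring
  have o6_21 : ⟪ksv6, ksv21⟫ = 0 := by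
    simp only [ksv6, ksv21]; rw [inner_kv]; ring
  have o7_13 : ⟪ksv7, ksv13⟫ = 0 := by
    simp only [ksv7, ksv13]; rw [inner_kv]; ring
  have o7_16 : ⟪ksv7, ksv16⟫ = 0 := by
    simp only [ksv7, ksv16]; rw [inner_kv]; ring
  have o7_19 : ⟪ksv7, ksv19⟫ = 0 := by
    simp only [ksv7, ksv19]; rw [inner_kv]; ring
  have o8_17 : ⟪ksv8, ksv17⟫ = 0 := by
    simp only [ksv8, ksv17]; rw [inner_kv]; ring
  have o8_22 : ⟪ksv8, ksv22⟫ = 0 := by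
    simp only [ksv8, ksv22]; rw [inner_kv]; linear_combination ((-1/4) : ℝ) * h2
  have o8_31 : ⟪ksv8, ksv31⟫ = 0 := by
    simp only [ksv8, ksv31]; rw [inner_kv]; ring
  have o9_30 : ⟪ksv9, ksv30⟫ = 0 := by
    simp only [ksv9, ksv30]; rw [inner_kv]; ring
  have o9_31 : ⟪ksv9, ksv31⟫ = 0 := by
    simp only [ksv9, ksv31]; rw [inner_kv]; ring
  have o9_32 : ⟪ksv9, ksv32⟫ = 0 := by
    simp only [ksv9, ksv32]; rw [inner_kv]; ring
  have o10_15 : ⟪ksv10, ksv15⟫ = 0 := by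
    simp only [ksv10, ksv15]; rw [inner_kv]; ring
  have o10_24 : ⟪ksv10, ksv24⟫ = 0 := by
    simp only [ksv10, ksv24]; rw [inner_kv]; linear_combination ((-1/4) : ℝ) * h2
  have o10_31 : ⟪ksv10, ksv31⟫ = 0 := by
    simp only [ksv10, ksv31]; rw [inner_kv]; ring
  have o11_13 : ⟪ksv11, ksv13⟫ = 0 := by
    simp only [ksv11, ksv13]; rw [inner_kv]; linear_combination ((-1/4) : ℝ) * h2
  have o11_20 : ⟪ksv11, ksv20⟫ = 0 := by
    simp only [ksv11, ksv20]; rw [inner_kv]; ring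
  have o11_29 : ⟪ksv11, ksv29⟫ = 0 := by
    simp only [ksv11, ksv29]; rw [inner_kv]; ring
  have o12_19 : ⟪ksv12, ksv19⟫ = 0 := by
    simp only [ksv12, ksv19]; rw [inner_kv]; ring
  have o12_20 : ⟪ksv12, ksv20⟫ = 0 := by
    simp only [ksv12, ksv20]; rw [inner_kv]; ring
  have o12_21 : ⟪ksv12, ksv21⟫ = 0 := by
    simp only [ksv12, ksv21]; rw [inner_kv]; ring
  have o13_20 : ⟪ksv13, ksv20⟫ = 0 := by
    simp only [ksv13, ksv20]; rw [inner_kv]; ring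
  have o13_28 : ⟪ksv13, ksv28⟫ = 0 := by
    simp only [ksv13, ksv28]; rw [inner_kv]; ring
  have o14_27 : ⟪ksv14, ksv27⟫ = 0 := by
    simp only [ksv14, ksv27]; rw [inner_kv]; ring
  have o14_29 : ⟪ksv14, ksv29⟫ = 0 := by
    simp only [ksv14, ksv29]; rw [inner_kv]; ring
  have o14_32 : ⟪ksv14, ksv32⟫ = 0 := by
    simp only [ksv14, ksv32]; rw [inner_kv]; ring
  have o15_17 : ⟪ksv15, ksv17⟫ = 0 := by
    simp only [ksv15, ksv17]; rw [inner_kv]; ring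
  have o15_24 : ⟪ksv15, ksv24⟫ = 0 := by
    simp only [ksv15, ksv24]; rw [inner_kv]; ring
  have o17_22 : ⟪ksv17, ksv22⟫ = 0 := by
    simp only [ksv17, ksv22]; rw [inner_kv]; ring
  have o18_25 : ⟪ksv18, ksv25⟫ = 0 := by
    simp only [ksv18, ksv25]; rw [inner_kv]; ring
  have o18_28 : ⟪ksv18, ksv28⟫ = 0 := by
    simp only [ksv18, ksv28]; rw [inner_kv]; ring
  have o18_30 : ⟪ksv18, ksv30⟫ = 0 := by
    simp only [ksv18, ksv30]; rw [inner_kv]; ring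
  have o19_21 : ⟪ksv19, ksv21⟫ = 0 := by
    simp only [ksv19, ksv21]; rw [inner_kv]; linear_combination ((-1/4) : ℝ) * h2
  have o19_29 : ⟪ksv19, ksv29⟫ = 0 := by
    simp only [ksv19, ksv29]; rw [inner_kv]; ring
  have o21_28 : ⟪ksv21, ksv28⟫ = 0 := by
    simp only [ksv21, ksv28]; rw [inner_kv]; ring
  have o22_26 : ⟪ksv22, ksv26⟫ = 0 := by
    simp only [ksv22, ksv26]; rw [inner_kv]; ring
  have o23_25 : ⟪ksv23, ksv25⟫ = 0 := by
    simp only [ksv23, ksv25]; rw [inner_kv]; ring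
  have o23_26 : ⟪ksv23, ksv26⟫ = 0 := by
    simp only [ksv23, ksv26]; rw [inner_kv]; ring
  have o23_27 : ⟪ksv23, ksv27⟫ = 0 := by
    simp only [ksv23, ksv27]; rw [inner_kv]; ring
  have o24_26 : ⟪ksv24, ksv26⟫ = 0 := by
    simp only [ksv24, ksv26]; rw [inner_kv]; ring
  have o25_32 : ⟪ksv25, ksv32⟫ = 0 := by
    simp only [ksv25, ksv32]; rw [inner_kv]; linear_combination ((1/4) : ℝ) * h2
  have o27_30 : ⟪ksv27, ksv30⟫ = 0 := by
    simp only [ksv27, ksv30]; rw [inner_kv]; linear_combination ((1/4) : ℝ) * h2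
  have P0_3 : C ksv0 = true → C ksv3 = true → False :=
    ks_pair hC n0 n3 o0_3
  have P0_9 : C ksv0 = true → C ksv9 = true → False :=
    ks_pair hC n0 n9 o0_9
  have P0_12 : C ksv0 = true → C ksv12 = true → False :=
    ks_pair hC n0 n12 o0_12
  have P0_16 : C ksv0 = true → C ksv16 = true → False :=
    ks_pair hC n0 n16 o0_16
  have P0_20 : C ksv0 = true → C ksv20 = true → False :=
    ks_pair hC n0 n20 o0_20
  have P1_8 : C ksv1 = true → C ksv8 = true → False :=
    ks_pair hC n1 n8 o1_8
  have P1_24 : C ksv1 = true → C ksv24 = true → False :=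
    ks_pair hC n1 n24 o1_24
  have P2_4 : C ksv2 = true → C ksv4 = true → False :=
    ks_pair hC n2 n4 o2_4
  have P2_16 : C ksv2 = true → C ksv16 = true → False :=
    ks_pair hC n2 n16 o2_16
  have P3_15 : C ksv3 = true → C ksv15 = true → False :=
    ks_pair hC n3 n15 o3_15
  have P3_16 : C ksv3 = true → C ksv16 = true → False :=
    ks_pair hC n3 n16 o3_16
  have P3_17 : C ksv3 = true → C ksv17 = true → False :=
    ks_pair hC n3 n17 o3_17
  have P4_16 : C ksv4 = true → C ksv16 = true → False :=
    ks_pair hC n4 n16 o4_16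
  have P5_10 : C ksv5 = true → C ksv10 = true → False :=
    ks_pair hC n5 n10 o5_10
  have P5_22 : C ksv5 = true → C ksv22 = true → False :=
    ks_pair hC n5 n22 o5_22
  have P6_11 : C ksv6 = true → C ksv11 = true → False :=
    ks_pair hC n6 n11 o6_11
  have P6_21 : C ksv6 = true → C ksv21 = true → False :=
    ks_pair hC n6 n21 o6_21
  have P7_13 : C ksv7 = true → C ksv13 = true → False :=
    ks_pair hC n7 n13 o7_13
  have P7_19 : C ksv7 = true → C ksv19 = true → False :=
    ks_pair hC n7 n19 o7_19
  have P8_31 : C ksv8 = true → C ksv31 = true → False :=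
    ks_pair hC n8 n31 o8_31
  have P9_30 : C ksv9 = true → C ksv30 = true → False :=
    ks_pair hC n9 n30 o9_30
  have P9_32 : C ksv9 = true → C ksv32 = true → False :=
    ks_pair hC n9 n32 o9_32
  have P10_31 : C ksv10 = true → C ksv31 = true → False :=
    ks_pair hC n10 n31 o10_31
  have P11_29 : C ksv11 = true → C ksv29 = true → False :=
    ks_pair hC n11 n29 o11_29
  have P12_20 : C ksv12 = true → C ksv20 = true → False :=
    ks_pair hC n12 n20 o12_20
  have P13_28 : C ksv13 = true → C ksv28 = true → False :=
    ks_pair hC n13 n28 o13_28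
  have P14_27 : C ksv14 = true → C ksv27 = true → False :=
    ks_pair hC n14 n27 o14_27
  have P14_32 : C ksv14 = true → C ksv32 = true → False :=
    ks_pair hC n14 n32 o14_32
  have P15_17 : C ksv15 = true → C ksv17 = true → False :=
    ks_pair hC n15 n17 o15_17
  have P18_25 : C ksv18 = true → C ksv25 = true → False :=
    ks_pair hC n18 n25 o18_25
  have P18_30 : C ksv18 = true → C ksv30 = true → False :=
    ks_pair hC n18 n30 o18_30
  have P19_29 : C ksv19 = true → C ksv29 = true → False :=
    ks_pair hC n19 n29 o19_29
  have P21_28 : C ksv21 = true → C ksv28 = true → False :=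
    ks_pair hC n21 n28 o21_28
  have P22_26 : C ksv22 = true → C ksv26 = true → False :=
    ks_pair hC n22 n26 o22_26
  have P23_25 : C ksv23 = true → C ksv25 = true → False :=
    ks_pair hC n23 n25 o23_25
  have P23_27 : C ksv23 = true → C ksv27 = true → False :=
    ks_pair hC n23 n27 o23_27
  have P24_26 : C ksv24 = true → C ksv26 = true → False :=
    ks_pair hC n24 n26 o24_26
  have T0_3_16 : C ksv0 = true ∨ C ksv3 = true ∨ C ksv16 = true :=
    ks_or hC n0 n3 n16 o0_3 o0_16 o3_16
  have T0_9_31 : C ksv0 = true ∨ C ksv9 = true ∨ C ksv31 = true :=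
    ks_or hC n0 n9 n31 o0_9 o0_31 o9_31
  have T0_12_20 : C ksv0 = true ∨ C ksv12 = true ∨ C ksv20 = true :=
    ks_or hC n0 n12 n20 o0_12 o0_20 o12_20
  have T0_23_26 : C ksv0 = true ∨ C ksv23 = true ∨ C ksv26 = true :=
    ks_or hC n0 n23 n26 o0_23 o0_26 o23_26
  have T1_7_16 : C ksv1 = true ∨ C ksv7 = true ∨ C ksv16 = true :=
    ks_or hC n1 n7 n16 o1_7 o1_16 o7_16
  have T2_4_16 : C ksv2 = true ∨ C ksv4 = true ∨ C ksv16 = true :=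
    ks_or hC n2 n4 n16 o2_4 o2_16 o4_16
  have T2_25_32 : C ksv2 = true ∨ C ksv25 = true ∨ C ksv32 = true :=
    ks_or hC n2 n25 n32 o2_25 o2_32 o25_32
  have T3_14_29 : C ksv3 = true ∨ C ksv14 = true ∨ C ksv29 = true :=
    ks_or hC n3 n14 n29 o3_14 o3_29 o14_29
  have T3_18_28 : C ksv3 = true ∨ C ksv18 = true ∨ C ksv28 = true :=
    ks_or hC n3 n18 n28 o3_18 o3_28 o18_28
  have T4_27_30 : C ksv4 = true ∨ C ksv27 = true ∨ C ksv30 = true :=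
    ks_or hC n4 n27 n30 o4_27 o4_30 o27_30
  have T5_6_16 : C ksv5 = true ∨ C ksv6 = true ∨ C ksv16 = true :=
    ks_or hC n5 n6 n16 o5_6 o5_16 o6_16
  have T8_17_22 : C ksv8 = true ∨ C ksv17 = true ∨ C ksv22 = true :=
    ks_or hC n8 n17 n22 o8_17 o8_22 o17_22
  have T10_15_24 : C ksv10 = true ∨ C ksv15 = true ∨ C ksv24 = true :=
    ks_or hC n10 n15 n24 o10_15 o10_24 o15_24
  have T11_13_20 : C ksv11 = true ∨ C ksv13 = true ∨ C ksv20 = true :=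
    ks_or hC n11 n13 n20 o11_13 o11_20 o13_20
  have T12_19_21 : C ksv12 = true ∨ C ksv19 = true ∨ C ksv21 = true :=
    ks_or hC n12 n19 n21 o12_19 o12_21 o19_21
  rcases T0_3_16 with h0 | h3 | h16
  ·
    rcases T1_7_16 with h1 | h7 | h16
    ·
      rcases T2_4_16 with h2 | h4 | h16
      ·
        rcases T3_14_29 with h3 | h14 | h29
        · -- 3 already false
          exact P0_3 h0 h3
        ·
          rcases T4_27_30 with h4 | h27 | h30
          · -- 4 already false
            exact P2_4 h2 h4
          · -- 27 already false
            exact P14_27 h14 h27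
          ·
            rcases T3_18_28 with h3 | h18 | h28
            · -- 3 already false
              exact P0_3 h0 h3
            · -- 18 already false
              exact P18_30 h18 h30
            ·
              rcases T11_13_20 with h11 | h13 | h20
              ·
                rcases T5_6_16 with h5 | h6 | h16
                ·
                  rcases T8_17_22 with h8 | h17 | h22
                  · -- 8 already false
                    exact P1_8 h1 h8
                  ·
                    rcases T10_15_24 with h10 | h15 | h24
                    · -- 10 already false
                      exact P5_10 h5 h10
                    · -- 15 already false
                      exact P15_17 h15 h17
                    · -- 24 already false
                      exact P1_24 h1 h24
                  · -- 22 already false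
                    exact P5_22 h5 h22
                · -- 6 already false
                  exact P6_11 h6 h11
                · -- 16 already false
                  exact P0_16 h0 h16
              · -- 13 already false
                exact P13_28 h13 h28
              · -- 20 already false
                exact P0_20 h0 h20
        ·
          rcases T11_13_20 with h11 | h13 | h20
          · -- 11 already false
            exact P11_29 h11 h29
          ·
            rcases T3_18_28 with h3 | h18 | h28
            · -- 3 already false
              exact P0_3 h0 h3
            ·
              rcases T4_27_30 with h4 | h27 | h30
              · -- 4 already false
                exact P2_4 h2 h4
              ·
                rcases T12_19_21 with h12 | h19 | h21
                · -- 12 already false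
                  exact P0_12 h0 h12
                · -- 19 already false
                  exact P19_29 h19 h29
                ·
                  rcases T5_6_16 with h5 | h6 | h16
                  ·
                    rcases T8_17_22 with h8 | h17 | h22
                    · -- 8 already false
                      exact P1_8 h1 h8
                    ·
                      rcases T10_15_24 with h10 | h15 | h24
                      · -- 10 already false
                        exact P5_10 h5 h10
                      · -- 15 already false
                        exact P15_17 h15 h17
                      · -- 24 already false
                        exact P1_24 h1 h24
                    · -- 22 already false
                      exact P5_22 h5 h22
                  · -- 6 already false
                    exact P6_21 h6 h21
                  · -- 16 already false
                    exact P0_16 h0 h16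
              · -- 30 already false
                exact P18_30 h18 h30
            · -- 28 already false
              exact P13_28 h13 h28
          · -- 20 already false
            exact P0_20 h0 h20
      ·
        rcases T2_25_32 with h2 | h25 | h32
        · -- 2 already false
          exact P2_4 h2 h4
        ·
          rcases T3_18_28 with h3 | h18 | h28
          · -- 3 already false
            exact P0_3 h0 h3
          · -- 18 already false
            exact P18_25 h18 h25
          ·
            rcases T11_13_20 with h11 | h13 | h20
            ·
              rcases T3_14_29 with h3 | h14 | h29
              · -- 3 already false
                exact P0_3 h0 h3
              ·
                rcases T5_6_16 with h5 | h6 | h16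
                ·
                  rcases T8_17_22 with h8 | h17 | h22
                  · -- 8 already false
                    exact P1_8 h1 h8
                  ·
                    rcases T10_15_24 with h10 | h15 | h24
                    · -- 10 already false
                      exact P5_10 h5 h10
                    · -- 15 already false
                      exact P15_17 h15 h17
                    · -- 24 already false
                      exact P1_24 h1 h24
                  · -- 22 already false
                    exact P5_22 h5 h22
                · -- 6 already false
                  exact P6_11 h6 h11
                · -- 16 already false
                  exact P0_16 h0 h16
              · -- 29 already false
                exact P11_29 h11 h29
            · -- 13 already false
              exact P13_28 h13 h28
            · -- 20 already false
              exact P0_20 h0 h20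
        ·
          rcases T3_14_29 with h3 | h14 | h29
          · -- 3 already false
            exact P0_3 h0 h3
          · -- 14 already false
            exact P14_32 h14 h32
          ·
            rcases T11_13_20 with h11 | h13 | h20
            · -- 11 already false
              exact P11_29 h11 h29
            ·
              rcases T3_18_28 with h3 | h18 | h28
              · -- 3 already false
                exact P0_3 h0 h3
              ·
                rcases T12_19_21 with h12 | h19 | h21
                · -- 12 already false
                  exact P0_12 h0 h12
                · -- 19 already false
                  exact P19_29 h19 h29
                ·
                  rcases T5_6_16 with h5 | h6 | h16
                  ·
                    rcases T8_17_22 with h8 | h17 | h22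
                    · -- 8 already false
                      exact P1_8 h1 h8
                    ·
                      rcases T10_15_24 with h10 | h15 | h24
                      · -- 10 already false
                        exact P5_10 h5 h10
                      · -- 15 already false
                        exact P15_17 h15 h17
                      · -- 24 already false
                        exact P1_24 h1 h24
                    · -- 22 already false
                      exact P5_22 h5 h22
                  · -- 6 already false
                    exact P6_21 h6 h21
                  · -- 16 already false
                    exact P0_16 h0 h16
              · -- 28 already false
                exact P13_28 h13 h28
            · -- 20 already false
              exact P0_20 h0 h20
      · -- 16 already false
        exact P0_16 h0 h16
    ·
      rcases T11_13_20 with h11 | h13 | h20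
      ·
        rcases T3_14_29 with h3 | h14 | h29
        · -- 3 already false
          exact P0_3 h0 h3
        ·
          rcases T5_6_16 with h5 | h6 | h16
          ·
            rcases T12_19_21 with h12 | h19 | h21
            · -- 12 already false
              exact P0_12 h0 h12
            · -- 19 already false
              exact P7_19 h7 h19
            ·
              rcases T3_18_28 with h3 | h18 | h28
              · -- 3 already false
                exact P0_3 h0 h3
              ·
                rcases T2_25_32 with h2 | h25 | h32
                ·
                  rcases T4_27_30 with h4 | h27 | h30
                  · -- 4 already false
                    exact P2_4 h2 h4
                  · -- 27 already false
                    exact P14_27 h14 h27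
                  · -- 30 already false
                    exact P18_30 h18 h30
                · -- 25 already false
                  exact P18_25 h18 h25
                · -- 32 already false
                  exact P14_32 h14 h32
              · -- 28 already false
                exact P21_28 h21 h28
          · -- 6 already false
            exact P6_11 h6 h11
          · -- 16 already false
            exact P0_16 h0 h16
        · -- 29 already false
          exact P11_29 h11 h29
      · -- 13 already false
        exact P7_13 h7 h13
      · -- 20 already false
        exact P0_20 h0 h20
    · -- 16 already false
      exact P0_16 h0 h16
  ·
    rcases T0_9_31 with h0 | h9 | h31
    · -- 0 already false
      exact P0_3 h0 h3
    ·
      rcases T0_12_20 with h0 | h12 | h20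
      · -- 0 already false
        exact P0_9 h0 h9
      ·
        rcases T0_23_26 with h0 | h23 | h26
        · -- 0 already false
          exact P0_9 h0 h9
        ·
          rcases T2_25_32 with h2 | h25 | h32
          ·
            rcases T4_27_30 with h4 | h27 | h30
            · -- 4 already false
              exact P2_4 h2 h4
            · -- 27 already false
              exact P23_27 h23 h27
            · -- 30 already false
              exact P9_30 h9 h30
          · -- 25 already false
            exact P23_25 h23 h25
          · -- 32 already false
            exact P9_32 h9 h32
        ·
          rcases T8_17_22 with h8 | h17 | h22
          ·
            rcases T1_7_16 with h1 | h7 | h16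
            · -- 1 already false
              exact P1_8 h1 h8
            ·
              rcases T10_15_24 with h10 | h15 | h24
              ·
                rcases T5_6_16 with h5 | h6 | h16
                · -- 5 already false
                  exact P5_10 h5 h10
                ·
                  rcases T11_13_20 with h11 | h13 | h20
                  · -- 11 already false
                    exact P6_11 h6 h11
                  · -- 13 already false
                    exact P7_13 h7 h13
                  · -- 20 already false
                    exact P12_20 h12 h20
                · -- 16 already false
                  exact P3_16 h3 h16
              · -- 15 already false
                exact P3_15 h3 h15
              · -- 24 already false
                exact P24_26 h24 h26
            · -- 16 already false
              exact P3_16 h3 h16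
          · -- 17 already false
            exact P3_17 h3 h17
          · -- 22 already false
            exact P22_26 h22 h26
      ·
        rcases T0_23_26 with h0 | h23 | h26
        · -- 0 already false
          exact P0_9 h0 h9
        ·
          rcases T2_25_32 with h2 | h25 | h32
          ·
            rcases T4_27_30 with h4 | h27 | h30
            · -- 4 already false
              exact P2_4 h2 h4
            · -- 27 already false
              exact P23_27 h23 h27
            · -- 30 already false
              exact P9_30 h9 h30
          · -- 25 already false
            exact P23_25 h23 h25
          · -- 32 already false
            exact P9_32 h9 h32
        ·
          rcases T8_17_22 with h8 | h17 | h22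
          ·
            rcases T1_7_16 with h1 | h7 | h16
            · -- 1 already false
              exact P1_8 h1 h8
            ·
              rcases T10_15_24 with h10 | h15 | h24
              ·
                rcases T5_6_16 with h5 | h6 | h16
                · -- 5 already false
                  exact P5_10 h5 h10
                ·
                  rcases T12_19_21 with h12 | h19 | h21
                  · -- 12 already false
                    exact P12_20 h12 h20
                  · -- 19 already false
                    exact P7_19 h7 h19
                  · -- 21 already false
                    exact P6_21 h6 h21
                · -- 16 already false
                  exact P3_16 h3 h16
              · -- 15 already false
                exact P3_15 h3 h15
              · -- 24 already false
                exact P24_26 h24 h26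
            · -- 16 already false
              exact P3_16 h3 h16
          · -- 17 already false
            exact P3_17 h3 h17
          · -- 22 already false
            exact P22_26 h22 h26
    ·
      rcases T8_17_22 with h8 | h17 | h22
      · -- 8 already false
        exact P8_31 h8 h31
      · -- 17 already false
        exact P3_17 h3 h17
      ·
        rcases T0_23_26 with h0 | h23 | h26
        · -- 0 already false
          exact P0_3 h0 h3
        ·
          rcases T5_6_16 with h5 | h6 | h16
          · -- 5 already false
            exact P5_22 h5 h22
          ·
            rcases T10_15_24 with h10 | h15 | h24
            · -- 10 already false
              exact P10_31 h10 h31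
            · -- 15 already false
              exact P3_15 h3 h15
            ·
              rcases T1_7_16 with h1 | h7 | h16
              · -- 1 already false
                exact P1_24 h1 h24
              ·
                rcases T11_13_20 with h11 | h13 | h20
                · -- 11 already false
                  exact P6_11 h6 h11
                · -- 13 already false
                  exact P7_13 h7 h13
                ·
                  rcases T12_19_21 with h12 | h19 | h21
                  · -- 12 already false
                    exact P12_20 h12 h20
                  · -- 19 already false
                    exact P7_19 h7 h19
                  · -- 21 already false
                    exact P6_21 h6 h21
              · -- 16 already false
                exact P3_16 h3 h16
          · -- 16 already false
            exact P3_16 h3 h16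
        · -- 26 already false
          exact P22_26 h22 h26
  ·
    rcases T0_9_31 with h0 | h9 | h31
    · -- 0 already false
      exact P0_16 h0 h16
    ·
      rcases T2_25_32 with h2 | h25 | h32
      · -- 2 already false
        exact P2_16 h2 h16
      ·
        rcases T0_23_26 with h0 | h23 | h26
        · -- 0 already false
          exact P0_16 h0 h16
        · -- 23 already false
          exact P23_25 h23 h25
        ·
          rcases T3_18_28 with h3 | h18 | h28
          · -- 3 already false
            exact P3_16 h3 h16
          · -- 18 already false
            exact P18_25 h18 h25
          ·
            rcases T4_27_30 with h4 | h27 | h30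
            · -- 4 already false
              exact P4_16 h4 h16
            ·
              rcases T3_14_29 with h3 | h14 | h29
              · -- 3 already false
                exact P3_16 h3 h16
              · -- 14 already false
                exact P14_27 h14 h27
              ·
                rcases T11_13_20 with h11 | h13 | h20
                · -- 11 already false
                  exact P11_29 h11 h29
                · -- 13 already false
                  exact P13_28 h13 h28
                ·
                  rcases T12_19_21 with h12 | h19 | h21
                  · -- 12 already false
                    exact P12_20 h12 h20
                  · -- 19 already false
                    exact P19_29 h19 h29
                  · -- 21 already false
                    exact P21_28 h21 h28
            · -- 30 already false
              exact P9_30 h9 h30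
      · -- 32 already false
        exact P9_32 h9 h32
    ·
      rcases T0_12_20 with h0 | h12 | h20
      · -- 0 already false
        exact P0_16 h0 h16
      ·
        rcases T0_23_26 with h0 | h23 | h26
        · -- 0 already false
          exact P0_16 h0 h16
        ·
          rcases T2_25_32 with h2 | h25 | h32
          · -- 2 already false
            exact P2_16 h2 h16
          · -- 25 already false
            exact P23_25 h23 h25
          ·
            rcases T3_14_29 with h3 | h14 | h29
            · -- 3 already false
              exact P3_16 h3 h16
            · -- 14 already false
              exact P14_32 h14 h32
            ·
              rcases T4_27_30 with h4 | h27 | h30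
              · -- 4 already false
                exact P4_16 h4 h16
              · -- 27 already false
                exact P23_27 h23 h27
              ·
                rcases T3_18_28 with h3 | h18 | h28
                · -- 3 already false
                  exact P3_16 h3 h16
                · -- 18 already false
                  exact P18_30 h18 h30
                ·
                  rcases T11_13_20 with h11 | h13 | h20
                  · -- 11 already false
                    exact P11_29 h11 h29
                  · -- 13 already false
                    exact P13_28 h13 h28
                  · -- 20 already false
                    exact P12_20 h12 h20
        ·
          rcases T8_17_22 with h8 | h17 | h22
          · -- 8 already false
            exact P8_31 h8 h31
          ·
            rcases T10_15_24 with h10 | h15 | h24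
            · -- 10 already false
              exact P10_31 h10 h31
            · -- 15 already false
              exact P15_17 h15 h17
            · -- 24 already false
              exact P24_26 h24 h26
          · -- 22 already false
            exact P22_26 h22 h26
      ·
        rcases T0_23_26 with h0 | h23 | h26
        · -- 0 already false
          exact P0_16 h0 h16
        ·
          rcases T2_25_32 with h2 | h25 | h32
          · -- 2 already false
            exact P2_16 h2 h16
          · -- 25 already false
            exact P23_25 h23 h25
          ·
            rcases T3_14_29 with h3 | h14 | h29
            · -- 3 already false
              exact P3_16 h3 h16
            · -- 14 already false
              exact P14_32 h14 h32
            ·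
              rcases T4_27_30 with h4 | h27 | h30
              · -- 4 already false
                exact P4_16 h4 h16
              · -- 27 already false
                exact P23_27 h23 h27
              ·
                rcases T3_18_28 with h3 | h18 | h28
                · -- 3 already false
                  exact P3_16 h3 h16
                · -- 18 already false
                  exact P18_30 h18 h30
                ·
                  rcases T12_19_21 with h12 | h19 | h21
                  · -- 12 already false
                    exact P12_20 h12 h20
                  · -- 19 already false
                    exact P19_29 h19 h29
                  · -- 21 already false
                    exact P21_28 h21 h28
        ·
          rcases T8_17_22 with h8 | h17 | h22
          · -- 8 already false
            exact P8_31 h8 h31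
          ·
            rcases T10_15_24 with h10 | h15 | h24
            · -- 10 already false
              exact P10_31 h10 h31
            · -- 15 already false
              exact P15_17 h15 h17
            · -- 24 already false
              exact P24_26 h24 h26
          · -- 22 already false
            exact P22_26 h22 h26
end

section
/- The Champernowne binary sequence, obtained by concatenating the binary representations of 1, 2, 3, … , is Borel normal in base 2: every binary string σ occurs in it with asymptotic relative frequency 2^(−|σ|). -/
open Filter

/-- The binary Champernowne sequence: the concatenation of the (big-endian)
binary representations of 1, 2, 3, …; `champernowneBit i` is its `i`-th bit.
(The concatenation of the representations of `1, …, i+1` has length `> i`.) -/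
def champernowneBit (i : ℕ) : Bool :=
  (((List.range (i + 1)).flatMap fun k => ((k + 1).bits).reverse)).getD i false

open Finset

namespace ChampAux

/-- Big-endian binary digits of `m`. -/
def D (m : ℕ) : List Bool := (m.bits).reverse

/-- Prefix word: concatenation of digits of `1, …, n`. -/
def W (n : ℕ) : List Bool := (List.range n).flatMap fun k => ((k + 1).bits).reverse

/-- Length of `W n`. -/
def L (n : ℕ) : ℕ := (W n).length

lemma D_length (m : ℕ) : (D m).length = m.size := by
  simp [D, Nat.size_eq_bits_len]

lemma W_succ (n : ℕ) : W (n + 1) = W n ++ D (n + 1) := by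
  simp [W, D, List.range_succ]

lemma L_succ (n : ℕ) : L (n + 1) = L n + (n + 1).size := by
  simp [L, W_succ, D_length]

lemma L_zero : L 0 = 0 := rfl

lemma size_pos' (m : ℕ) : 1 ≤ (m + 1).size := Nat.size_pos.2 (Nat.succ_pos m)

lemma L_mono : Monotone L := by
  apply monotone_nat_of_le_succ
  intro n
  rw [L_succ]
  exact Nat.le_add_right _ _

lemma le_L (n : ℕ) : n ≤ L n := by
  induction n with
  | zero => simp [L_zero]
  | succ n ih => rw [L_succ]; have := size_pos' n; omega

lemma W_prefix {n n' : ℕ} (h : n ≤ n') : ∃ t, W n' = W n ++ t := by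
  induction n' with
  | zero => exact ⟨[], by rw [Nat.le_zero.1 h, List.append_nil]⟩
  | succ n' ih =>
    rcases Nat.lt_or_ge n (n' + 1) with h' | h'
    · obtain ⟨t, ht⟩ := ih (Nat.lt_succ_iff.1 h')
      exact ⟨t ++ D (n' + 1), by rw [W_succ, ht, List.append_assoc]⟩
    · exact ⟨[], by rw [Nat.le_antisymm h h', List.append_nil]⟩

lemma champernowneBit_eq {n i : ℕ} (h : i < L n) :
    champernowneBit i = (W n).getD i false := by
  have h1 : champernowneBit i = (W (i + 1)).getD i false := rfl
  rcases Nat.le_total n (i + 1) with hle | hle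
  · obtain ⟨t, ht⟩ := W_prefix hle
    rw [h1, ht, List.getD_append _ _ _ _ h]
  · obtain ⟨t, ht⟩ := W_prefix hle
    have hi : i < L (i + 1) := lt_of_lt_of_le (Nat.lt_succ_self i) (le_L (i + 1))
    rw [h1, ht, List.getD_append _ _ _ _ hi]

/-- The bit at position `L m + j` is the `j`-th big-endian digit of `m + 1`. -/
lemma champernowneBit_formula {m j : ℕ} (hj : j < (m + 1).size) :
    champernowneBit (L m + j) = (D (m + 1)).getD j false := by
  have hlt : L m + j < L (m + 1) := by rw [L_succ]; omega
  rw [champernowneBit_eq hlt, W_succ, List.getD_append_right]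
  · simp [L]
  · simp [L]

end ChampAux

namespace ChampAux

/-- Big-endian value of a list of bits. -/
def v (l : List Bool) : ℕ := l.foldl (fun a b => 2 * a + b.toNat) 0

lemma foldl_eq (l : List Bool) (a : ℕ) :
    l.foldl (fun a b => 2 * a + b.toNat) a = a * 2 ^ l.length + v l := by
  induction l generalizing a with
  | nil => simp [v]
  | cons b t ih =>
    simp only [v, List.foldl_cons, List.length_cons] at *
    rw [ih (2 * a + b.toNat), ih (2 * 0 + b.toNat)]
    ring

lemma v_cons (b : Bool) (t : List Bool) :
    v (b :: t) = b.toNat * 2 ^ t.length + v t := by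
  simp only [v, List.foldl_cons]
  rw [foldl_eq]
  ring_nf
  simp only [v]; ring_nf

lemma v_lt (l : List Bool) : v l < 2 ^ l.length := by
  induction l with
  | nil => simp [v]
  | cons b t ih =>
    rw [v_cons]
    have : b.toNat ≤ 1 := Bool.toNat_le b
    simp only [List.length_cons, pow_succ]
    nlinarith [ih]

lemma v_append (l₁ l₂ : List Bool) :
    v (l₁ ++ l₂) = v l₁ * 2 ^ l₂.length + v l₂ := by
  simp only [v, List.foldl_append]
  rw [foldl_eq]
  rfl

lemma v_inj {l₁ l₂ : List Bool} (h : l₁.length = l₂.length) (hv : v l₁ = v l₂) :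
    l₁ = l₂ := by
  induction l₁ generalizing l₂ with
  | nil => cases l₂ with
    | nil => rfl
    | cons b t => simp at h
  | cons b t ih =>
    cases l₂ with
    | nil => simp at h
    | cons b' t' =>
      simp only [List.length_cons, Nat.succ_inj] at h
      rw [v_cons, v_cons, h] at hv
      have h1 : v t < 2 ^ t'.length := h ▸ v_lt t
      have h2 : v t' < 2 ^ t'.length := v_lt t'
      have hb : b.toNat = b'.toNat := by
        rcases b <;> rcases b' <;> simp_all <;> omega
      have : b = b' := by rcases b <;> rcases b' <;> simp_all
      subst this
      have : v t = v t' := by omega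
      rw [ih h this]

lemma v_D (m : ℕ) : v (D m) = m := by
  have : ∀ m : ℕ, m.bits.foldr (fun b a => 2 * a + b.toNat) 0 = m := by
    intro m
    induction m using Nat.strong_induction_on with
    | _ m ih =>
      rcases Nat.eq_zero_or_pos m with h | h
      · simp [h]
      rcases Nat.even_or_odd m with ⟨c, hc⟩ | ⟨c, hc⟩
      · have hc' : m = 2 * c := by omega
        have hcpos : c ≠ 0 := by omega
        rw [hc', Nat.bit0_bits c hcpos, List.foldr_cons, ih c (by omega)]
        simp
      · rw [hc, Nat.bit1_bits c, List.foldr_cons, ih c (by omega)]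
        simp [hc]
  rw [D, v, List.foldl_reverse]
  exact this m

/-- Value of a digit window. -/
lemma v_window {l : List Bool} {j k : ℕ} (h : j + k ≤ l.length) :
    v ((l.drop j).take k) = v l / 2 ^ (l.length - j - k) % 2 ^ k := by
  set p := l.length - j - k with hp
  have hsplit1 : l = l.take (j + k) ++ l.drop (j + k) := (List.take_append_drop _ l).symm
  have hlen1 : (l.take (j + k)).length = j + k := by
    rw [List.length_take]; omega
  have hlen2 : (l.drop (j + k)).length = p := by
    rw [List.length_drop]; omega
  have hv1 : v l = v (l.take (j + k)) * 2 ^ p + v (l.drop (j + k)) := by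
    conv_lhs => rw [hsplit1]
    rw [v_append, hlen2]
  have hdiv : v l / 2 ^ p = v (l.take (j + k)) := by
    rw [hv1, Nat.add_comm, Nat.add_mul_div_right _ _ (Nat.two_pow_pos p),
      Nat.div_eq_of_lt (hlen2 ▸ v_lt _), Nat.zero_add]
  have hlenw : ((l.drop j).take k).length = k := by
    rw [List.length_take, List.length_drop]; omega
  have hsplit2 : l.take (j + k) = l.take j ++ (l.drop j).take k := List.take_add
  rw [hdiv, hsplit2, v_append, hlenw, mul_comm, Nat.mul_add_mod,
    Nat.mod_eq_of_lt (lt_of_lt_of_eq (v_lt _) (by rw [hlenw]))]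

end ChampAux

namespace ChampAux

lemma div_eq_iff' {x q vv : ℕ} (hq : 0 < q) : x / q = vv ↔ vv * q ≤ x ∧ x < vv * q + q := by
  constructor
  · rintro rfl
    refine ⟨Nat.div_mul_le_self x q, ?_⟩
    have h1 := Nat.mod_lt x hq
    have h2 := Nat.div_add_mod x q
    have : q * (x / q) = (x / q) * q := Nat.mul_comm _ _
    omega
  · rintro ⟨h1, h2⟩
    exact Nat.div_eq_of_lt_le h1 (by rw [Nat.succ_mul]; omega)

/-- Sum of a periodic function over a window of one period length. -/
lemma period_sum (f : ℕ → ℕ) (Q : ℕ) (A : ℕ) :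
    ∑ i ∈ Finset.Ico A (A + Q), f (i % Q) = ∑ r ∈ Finset.range Q, f r := by
  rcases Nat.eq_zero_or_pos Q with hQ | hQ
  · simp [hQ]
  induction A with
  | zero => 
    rw [Finset.range_eq_Ico]
    refine Finset.sum_congr (by simp) fun i hi => ?_
    rw [Finset.mem_Ico] at hi
    rw [Nat.mod_eq_of_lt (by omega)]
  | succ A ih =>
    have e1 : ∑ i ∈ Finset.Ico A (A + Q), f (i % Q)
        = f (A % Q) + ∑ i ∈ Finset.Ico (A + 1) (A + Q), f (i % Q) :=
      Finset.sum_eq_sum_Ico_succ_bot (by omega) _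
    have e2 : ∑ i ∈ Finset.Ico (A + 1) (A + 1 + Q), f (i % Q)
        = ∑ i ∈ Finset.Ico (A + 1) (A + Q), f (i % Q) + f ((A + Q) % Q) := by
      rw [show A + 1 + Q = (A + Q) + 1 by omega]
      exact Finset.sum_Ico_succ_top (by omega) _
    rw [e2, Nat.add_mod_right, ← ih]
    omega

lemma periods_sum (f : ℕ → ℕ) (Q A q : ℕ) :
    ∑ i ∈ Finset.Ico A (A + q * Q), f (i % Q) = q * ∑ r ∈ Finset.range Q, f r := by
  induction q with
  | zero => simp
  | succ q ih =>
    have : A + (q + 1) * Q = (A + q * Q) + Q := by ring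
    rw [this, ← Finset.sum_Ico_consecutive _ (by omega : A ≤ A + q * Q) (by omega),
      ih, period_sum]
    ring

/-- The central counting estimate: among any interval, the proportion of `m`
whose bits `p, …, p+k-1` (as `m / 2^p % 2^k`) form a given pattern is `2^(-k)`
up to an error of `2^p`. -/
lemma count_est (A B p k vv : ℕ) (hAB : A ≤ B) (hv : vv < 2 ^ k) :
    |((((Finset.Ico A B).filter fun m => m / 2 ^ p % 2 ^ k = vv).card : ℝ))
      - ((B : ℝ) - A) / 2 ^ k| ≤ 2 ^ p := by
  set Q := 2 ^ (p + k) with hQ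
  have hQpos : 0 < Q := Nat.two_pow_pos _
  have hppos : (0:ℕ) < 2 ^ p := Nat.two_pow_pos _
  -- the condition in terms of m % Q
  have hcond : ∀ m : ℕ, (m / 2 ^ p % 2 ^ k = vv) ↔
      (vv * 2 ^ p ≤ m % Q ∧ m % Q < vv * 2 ^ p + 2 ^ p) := by
    intro m
    have h1 : m % Q / 2 ^ p = m / 2 ^ p % 2 ^ k := by
      rw [hQ, pow_add]
      exact Nat.mod_mul_right_div_self m _ _
    rw [← h1, div_eq_iff' hppos]
  -- indicator function
  set f : ℕ → ℕ := fun r => if vv * 2 ^ p ≤ r ∧ r < vv * 2 ^ p + 2 ^ p then 1 else 0 with hf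
  have hcard : (((Finset.Ico A B).filter fun m => m / 2 ^ p % 2 ^ k = vv).card : ℕ)
      = ∑ i ∈ Finset.Ico A B, f (i % Q) := by
    rw [Finset.card_filter]
    refine Finset.sum_congr rfl fun i _ => ?_
    rw [hf]
    simp only
    by_cases h : vv * 2 ^ p ≤ i % Q ∧ i % Q < vv * 2 ^ p + 2 ^ p
    · rw [if_pos ((hcond i).2 h), if_pos h]
    · rw [if_neg (fun hc => h ((hcond i).1 hc)), if_neg h]
  -- one full period sums to 2^p
  have hfull : ∑ r ∈ Finset.range Q, f r = 2 ^ p := by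
    have : ∑ r ∈ Finset.range Q, f r
        = ((Finset.range Q).filter fun r => vv * 2 ^ p ≤ r ∧ r < vv * 2 ^ p + 2 ^ p).card := by
      rw [Finset.card_filter]
    rw [this]
    have hsub : (Finset.range Q).filter (fun r => vv * 2 ^ p ≤ r ∧ r < vv * 2 ^ p + 2 ^ p)
        = Finset.Ico (vv * 2 ^ p) (vv * 2 ^ p + 2 ^ p) := by
      ext r
      simp only [Finset.mem_filter, Finset.mem_range, Finset.mem_Ico]
      constructor
      · rintro ⟨-, h2, h3⟩; exact ⟨h2, h3⟩
      · rintro ⟨h2, h3⟩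
        refine ⟨lt_of_lt_of_le h3 ?_, h2, h3⟩
        have : vv + 1 ≤ 2 ^ k := hv
        calc vv * 2 ^ p + 2 ^ p = (vv + 1) * 2 ^ p := by ring
        _ ≤ 2 ^ k * 2 ^ p := Nat.mul_le_mul_right _ this
        _ = Q := by rw [hQ, pow_add]; ring
      
    rw [hsub, Nat.card_Ico]
    omega
  -- split the interval
  obtain ⟨q, rr, hrrQ, hBA⟩ : ∃ q rr, rr < Q ∧ B = A + (q * Q + rr) := by
    refine ⟨(B - A) / Q, (B - A) % Q, Nat.mod_lt _ hQpos, ?_⟩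
    have h1 := Nat.div_add_mod (B - A) Q
    have h2 : (B - A) / Q * Q = Q * ((B - A) / Q) := Nat.mul_comm _ _
    omega
  have hsplit : ∑ i ∈ Finset.Ico A B, f (i % Q)
      = q * 2 ^ p + ∑ i ∈ Finset.Ico (A + q * Q) (A + q * Q + rr), f (i % Q) := by
    rw [hBA, ← add_assoc, ← Finset.sum_Ico_consecutive (fun i => f (i % Q))
      (by omega : A ≤ A + q * Q) (by omega : A + q * Q ≤ A + q * Q + rr),
      periods_sum, hfull]
  set Srem := ∑ i ∈ Finset.Ico (A + q * Q) (A + q * Q + rr), f (i % Q) with hS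
  have hSrem : Srem ≤ 2 ^ p := by
    have hsub2 : Finset.Ico (A + q * Q) (A + q * Q + rr) ⊆
        Finset.Ico (A + q * Q) (A + q * Q + Q) := by
      apply Finset.Ico_subset_Ico le_rfl
      omega
    calc Srem ≤ ∑ i ∈ Finset.Ico (A + q * Q) (A + q * Q + Q), f (i % Q) :=
          Finset.sum_le_sum_of_subset hsub2
    _ = 2 ^ p := by rw [period_sum, hfull]
  -- real arithmetic
  rw [hcard, hsplit]
  have h2k : (0:ℝ) < 2 ^ k := by positivity
  have hQr : (Q : ℝ) = 2 ^ p * 2 ^ k := by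
    rw [hQ]; push_cast [pow_add]; ring
  have hBAr : (B : ℝ) - A = q * Q + rr := by
    rw [hBA]; push_cast; ring
  have hSr : (0:ℝ) ≤ Srem := by positivity
  have hSr2 : (Srem : ℝ) ≤ 2 ^ p := by exact_mod_cast hSrem
  have hrrk : (rr : ℝ) / 2 ^ k ≤ 2 ^ p := by
    rw [div_le_iff₀ h2k]
    have : (rr : ℝ) < Q := by exact_mod_cast hrrQ
    rw [hQr] at this
    linarith
  have hrrk0 : (0:ℝ) ≤ (rr : ℝ) / 2 ^ k := by positivity
  have expand : ((B:ℝ) - A) / 2 ^ k = q * 2 ^ p + rr / 2 ^ k := by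
    rw [hBAr, hQr]
    field_simp
  rw [expand]
  have heq : ((q * 2 ^ p + Srem : ℕ) : ℝ) - (q * 2 ^ p + rr / 2 ^ k)
      = (Srem : ℝ) - rr / 2 ^ k := by push_cast; ring
  rw [heq, abs_le]
  constructor <;> linarith

end ChampAux

namespace ChampAux

/-- Number of in-number occurrences of the pattern with value `vv`, length `k`,
inside the binary representation of `m`. -/
def g (k vv m : ℕ) : ℕ :=
  ((Finset.range (m.size + 1 - k)).filter fun j =>
    m / 2 ^ (m.size - k - j) % 2 ^ k = vv).card

lemma size_eq_of_mem {s m : ℕ} (h1 : 2 ^ s ≤ m) (h2 : m < 2 ^ (s + 1)) :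
    m.size = s + 1 :=
  le_antisymm (Nat.size_le.2 h2) (Nat.lt_size.2 h1)

lemma geom_bound (r s k : ℕ) (hr : r = s + 1 - k) :
    ∑ j ∈ Finset.range r, (2:ℝ) ^ (s - k - j) ≤ 2 ^ (s + 1) := by
  rcases Nat.lt_or_ge s k with h | h
  · have : r = 0 := by omega
    simp [this]
  · have hr' : r = (s - k) + 1 := by omega
    have : ∑ j ∈ Finset.range r, (2:ℝ) ^ (s - k - j)
        = ∑ j ∈ Finset.range r, (2:ℝ) ^ j := by
      rw [← Finset.sum_range_reflect]
      refine Finset.sum_congr rfl fun j hj => ?_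
      rw [Finset.mem_range] at hj
      congr 1
      omega
    rw [this, geom_sum_eq (by norm_num : (2:ℝ) ≠ 1)]
    have h1 : (2:ℝ) ^ r ≤ 2 ^ (s + 1) :=
      pow_le_pow_right₀ (by norm_num) (by omega)
    norm_num
    linarith

/-- Block estimate: the in-number occurrence counts summed over an interval of
numbers all having `s` binary digits. -/
lemma block_est (k vv : ℕ) (hv : vv < 2 ^ k) (s : ℕ) {A B : ℕ} (hAB : A ≤ B)
    (hsz : ∀ m ∈ Finset.Ico A B, Nat.size m = s) :
    |(∑ m ∈ Finset.Ico A B, (g k vv m : ℝ))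
      - ∑ m ∈ Finset.Ico A B, ((m.size + 1 - k : ℕ) : ℝ) / 2 ^ k| ≤ 2 ^ (s + 1) := by
  set r := s + 1 - k with hrdef
  -- rewrite g as a double sum
  have hg : ∀ m ∈ Finset.Ico A B, (g k vv m : ℝ)
      = ∑ j ∈ Finset.range r, (if m / 2 ^ (s - k - j) % 2 ^ k = vv then (1:ℝ) else 0) := by
    intro m hm
    rw [g, Finset.card_filter, hsz m hm]
    push_cast
    rfl
  rw [Finset.sum_congr rfl hg]
  -- rewrite the main term
  have hmain : ∀ m ∈ Finset.Ico A B, ((m.size + 1 - k : ℕ) : ℝ) / 2 ^ k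
      = ∑ j ∈ Finset.range r, (1:ℝ) / 2 ^ k := by
    intro m hm
    rw [Finset.sum_const, Finset.card_range, hsz m hm, nsmul_eq_mul]
    ring
  rw [Finset.sum_congr rfl hmain]
  rw [show (∑ m ∈ Finset.Ico A B, ∑ j ∈ Finset.range r,
      (if m / 2 ^ (s - k - j) % 2 ^ k = vv then (1:ℝ) else 0))
    = ∑ j ∈ Finset.range r, ∑ m ∈ Finset.Ico A B,
      (if m / 2 ^ (s - k - j) % 2 ^ k = vv then (1:ℝ) else 0) from Finset.sum_comm]
  rw [show (∑ _m ∈ Finset.Ico A B, ∑ _j ∈ Finset.range r, (1:ℝ) / 2 ^ k)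
    = ∑ _j ∈ Finset.range r, ∑ _m ∈ Finset.Ico A B, (1:ℝ) / 2 ^ k from Finset.sum_comm]
  rw [← Finset.sum_sub_distrib]
  refine le_trans (Finset.abs_sum_le_sum_abs _ _) ?_
  refine le_trans (Finset.sum_le_sum fun j hj => ?_) (geom_bound r s k hrdef)
  -- each j: apply count_est
  have hcount : ∑ m ∈ Finset.Ico A B, (if m / 2 ^ (s - k - j) % 2 ^ k = vv then (1:ℝ) else 0)
      = (((Finset.Ico A B).filter fun m => m / 2 ^ (s - k - j) % 2 ^ k = vv).card : ℝ) := by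
    rw [Finset.card_filter]
    push_cast
    rfl
  have hconst : ∑ m ∈ Finset.Ico A B, (1:ℝ) / 2 ^ k = ((B : ℝ) - A) / 2 ^ k := by
    rw [Finset.sum_const, Nat.card_Ico, nsmul_eq_mul]
    push_cast [hAB]
    ring
  rw [hcount, hconst]
  exact count_est A B (s - k - j) k vv hAB hv

lemma dyadic_est (k vv : ℕ) (hv : vv < 2 ^ k) (t : ℕ) :
    |(∑ m ∈ Finset.Ico 1 (2 ^ t), (g k vv m : ℝ))
      - ∑ m ∈ Finset.Ico 1 (2 ^ t), ((m.size + 1 - k : ℕ) : ℝ) / 2 ^ k| ≤ 2 ^ (t + 2) := by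
  induction t with
  | zero => simp
  | succ t ih =>
    have h1 : (1:ℕ) ≤ 2 ^ t := Nat.one_le_two_pow
    have h2 : (2:ℕ) ^ t ≤ 2 ^ (t + 1) := Nat.pow_le_pow_right (by norm_num) (by omega)
    have hs1 : ∀ f : ℕ → ℝ, ∑ m ∈ Finset.Ico 1 (2 ^ (t+1)), f m
        = ∑ m ∈ Finset.Ico 1 (2 ^ t), f m + ∑ m ∈ Finset.Ico (2 ^ t) (2 ^ (t+1)), f m :=
      fun f => (Finset.sum_Ico_consecutive f h1 h2).symm
    rw [hs1, hs1]
    have hblock := block_est k vv hv (t + 1) (hAB := h2)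
      (fun m hm => by
        rw [Finset.mem_Ico] at hm
        exact size_eq_of_mem hm.1 hm.2)
    have tri : ∀ a b c d : ℝ, |a + b - (c + d)| ≤ |a - c| + |b - d| := by
      intro a b c d
      rw [show a + b - (c + d) = (a - c) + (b - d) by ring]
      exact abs_add_le _ _
    refine le_trans (tri _ _ _ _) (le_trans (add_le_add ih hblock) ?_)
    have h3 : (2:ℝ) ^ (t + 1 + 1) = 2 ^ (t + 2) := by congr 1
    have h4 : (2:ℝ) ^ (t + 1 + 2) = 2 ^ (t + 2) * 2 := by
      rw [show t + 1 + 2 = (t + 2) + 1 by omega, pow_succ]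
    rw [h3, h4]
    linarith

end ChampAux

namespace ChampAux

lemma L_sum (M : ℕ) : L M = ∑ m ∈ Finset.Ico 1 (M + 1), Nat.size m := by
  induction M with
  | zero => simp [L_zero]
  | succ M ih =>
    rw [L_succ, ih, Finset.sum_Ico_succ_top (by omega : 1 ≤ M + 1)]

lemma total_est (k vv : ℕ) (hv : vv < 2 ^ k) (M : ℕ) (hM : 1 ≤ M) :
    |(∑ m ∈ Finset.Ico 1 (M + 1), (g k vv m : ℝ))
      - ∑ m ∈ Finset.Ico 1 (M + 1), ((m.size + 1 - k : ℕ) : ℝ) / 2 ^ k|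
      ≤ 2 ^ (M.size + 2) := by
  set n := M.size with hn
  have hn1 : 1 ≤ n := Nat.size_pos.2 hM
  have hMlt : M < 2 ^ n := Nat.lt_size_self M
  have hMge : 2 ^ (n - 1) ≤ M := Nat.lt_size.1 (by omega)
  have h1 : (1:ℕ) ≤ 2 ^ (n - 1) := Nat.one_le_two_pow
  have h2 : 2 ^ (n - 1) ≤ M + 1 := by omega
  have hs1 : ∀ f : ℕ → ℝ, ∑ m ∈ Finset.Ico 1 (M + 1), f m
      = ∑ m ∈ Finset.Ico 1 (2 ^ (n - 1)), f m + ∑ m ∈ Finset.Ico (2 ^ (n - 1)) (M + 1), f m :=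
    fun f => (Finset.sum_Ico_consecutive f h1 h2).symm
  rw [hs1, hs1]
  have hdy := dyadic_est k vv hv (n - 1)
  have hblock := block_est k vv hv n (hAB := h2) (fun m hm => by
    rw [Finset.mem_Ico] at hm
    have := size_eq_of_mem (s := n - 1) hm.1 (by
      rw [show n - 1 + 1 = n by omega]
      omega)
    rwa [show n - 1 + 1 = n by omega] at this)
  have tri : ∀ a b c d : ℝ, |a + b - (c + d)| ≤ |a - c| + |b - d| := by
    intro a b c d
    rw [show a + b - (c + d) = (a - c) + (b - d) by ring]
    exact abs_add_le _ _
  refine le_trans (tri _ _ _ _) (le_trans (add_le_add hdy hblock) ?_)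
  have e1 : (2:ℝ) ^ (n - 1 + 2) ≤ 2 ^ (n + 1) := by
    apply pow_le_pow_right₀ (by norm_num)
    omega
  have e2 : (2:ℝ) ^ (n + 2) = 2 ^ (n + 1) * 2 := by
    rw [show n + 2 = (n + 1) + 1 by omega, pow_succ]
  have e3 : (2:ℝ) ^ (n + 1) ≤ 2 ^ (n + 1) := le_refl _
  rw [e2]
  linarith

lemma MS_est (k : ℕ) (hk : 1 ≤ k) (M : ℕ) :
    |(∑ m ∈ Finset.Ico 1 (M + 1), ((m.size + 1 - k : ℕ) : ℝ) / 2 ^ k)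
      - (L M : ℝ) / 2 ^ k| ≤ k * M := by
  rw [L_sum]
  have hcast : ((∑ m ∈ Finset.Ico 1 (M + 1), Nat.size m : ℕ) : ℝ)
      = ∑ m ∈ Finset.Ico 1 (M + 1), (Nat.size m : ℝ) := by push_cast; rfl
  rw [hcast, Finset.sum_div, ← Finset.sum_sub_distrib]
  refine le_trans (Finset.abs_sum_le_sum_abs _ _) ?_
  have hbd : ∀ m ∈ Finset.Ico 1 (M + 1),
      |((m.size + 1 - k : ℕ) : ℝ) / 2 ^ k - (Nat.size m : ℝ) / 2 ^ k| ≤ (k:ℝ) := by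
    intro m _
    rw [div_sub_div_same, abs_div, abs_of_pos (by positivity : (0:ℝ) < 2 ^ k)]
    have h2k : (1:ℝ) ≤ 2 ^ k := one_le_pow₀ (by norm_num)
    have hnum : |((m.size + 1 - k : ℕ) : ℝ) - (Nat.size m : ℝ)| ≤ (k:ℝ) := by
      have hub : (m.size + 1 - k : ℕ) ≤ m.size + 1 := by omega
      have hlb : m.size ≤ (m.size + 1 - k : ℕ) + k := by omega
      have c1 : ((m.size + 1 - k : ℕ) : ℝ) ≤ (m.size : ℝ) + 1 := by exact_mod_cast hub
      have c2 : (m.size : ℝ) ≤ ((m.size + 1 - k : ℕ) : ℝ) + k := by exact_mod_cast hlb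
      have hk1 : (1:ℝ) ≤ (k:ℝ) := by exact_mod_cast hk
      rw [abs_le]
      constructor <;> linarith
    calc |((m.size + 1 - k : ℕ) : ℝ) - (Nat.size m : ℝ)| / 2 ^ k
        ≤ |((m.size + 1 - k : ℕ) : ℝ) - (Nat.size m : ℝ)| / 1 := by
          apply div_le_div_of_nonneg_left (abs_nonneg _) (by norm_num) h2k |>.trans_eq rfl
      _ ≤ (k:ℝ) := by rwa [div_one]
  refine le_trans (Finset.sum_le_sum hbd) ?_
  rw [Finset.sum_const, Nat.card_Ico, nsmul_eq_mul]
  simp [mul_comm]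

lemma L_lower (M : ℕ) (hM : 2 ≤ Nat.size M) :
    2 ^ (Nat.size M - 2) * (Nat.size M - 1) ≤ L M := by
  set n := Nat.size M with hn
  have hM1 : 2 ^ (n - 1) ≤ M := Nat.lt_size.1 (by omega)
  have hpow : (2:ℕ) ^ (n - 2) ≤ 2 ^ (n - 1) := Nat.pow_le_pow_right (by norm_num) (by omega)
  have hsub : Finset.Ico (2 ^ (n - 2)) (M + 1) ⊆ Finset.Ico 1 (M + 1) :=
    Finset.Ico_subset_Ico Nat.one_le_two_pow le_rfl
  have hterm : ∀ m ∈ Finset.Ico (2 ^ (n - 2)) (M + 1), n - 1 ≤ Nat.size m := by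
    intro m hm
    rw [Finset.mem_Ico] at hm
    have : n - 2 < Nat.size m := Nat.lt_size.2 hm.1
    omega
  calc 2 ^ (n - 2) * (n - 1)
      ≤ (Finset.Ico (2 ^ (n - 2)) (M + 1)).card * (n - 1) := by
        apply Nat.mul_le_mul_right
        rw [Nat.card_Ico]
        have : 2 * 2 ^ (n - 2) ≤ 2 ^ (n - 1) := by
          rw [← pow_succ']
          apply Nat.pow_le_pow_right (by norm_num)
          omega
        omega
    _ = ∑ _m ∈ Finset.Ico (2 ^ (n - 2)) (M + 1), (n - 1) := by
        rw [Finset.sum_const, smul_eq_mul]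
    _ ≤ ∑ m ∈ Finset.Ico (2 ^ (n - 2)) (M + 1), Nat.size m :=
        Finset.sum_le_sum hterm
    _ ≤ ∑ m ∈ Finset.Ico 1 (M + 1), Nat.size m :=
        Finset.sum_le_sum_of_subset hsub
    _ = L M := (L_sum M).symm

end ChampAux

namespace ChampAux

lemma window_eq (σ : List Bool) (m j : ℕ) (hjk : j + σ.length ≤ (m + 1).size) :
    (List.ofFn fun t : Fin σ.length => champernowneBit (L m + j + ↑t))
      = ((D (m + 1)).drop j).take σ.length := by
  have hlenD : (D (m + 1)).length = (m + 1).size := D_length _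
  apply List.ext_getElem
  · simp only [List.length_ofFn, List.length_take, List.length_drop, hlenD]
    omega
  · intro t h1 h2
    simp only [List.getElem_ofFn, Fin.val_mk]
    rw [List.getElem_take, List.getElem_drop]
    have ht : t < σ.length := by simpa using h1
    have hjt : j + t < (m + 1).size := by omega
    have harg : L m + j + t = L m + (j + t) := by omega
    rw [harg, champernowneBit_formula hjt,
      List.getD_eq_getElem _ _ (by rw [hlenD]; exact hjt)]

lemma window_iff (σ : List Bool) (m j : ℕ) (hjk : j + σ.length ≤ (m + 1).size) :
    ((List.ofFn fun t : Fin σ.length => champernowneBit (L m + j + ↑t)) = σ)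
      ↔ (m + 1) / 2 ^ ((m + 1).size - σ.length - j) % 2 ^ σ.length = v σ := by
  rw [window_eq σ m j hjk]
  have hlenD : (D (m + 1)).length = (m + 1).size := D_length _
  have hval : v (((D (m + 1)).drop j).take σ.length)
      = (m + 1) / 2 ^ ((m + 1).size - σ.length - j) % 2 ^ σ.length := by
    have hw := v_window (l := D (m + 1)) (j := j) (k := σ.length)
      (by rw [hlenD]; exact hjk)
    rw [v_D] at hw
    rw [hw, hlenD, show (m + 1).size - j - σ.length = (m + 1).size - σ.length - j by omega]
  have hlen : (((D (m + 1)).drop j).take σ.length).length = σ.length := by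
    rw [List.length_take, List.length_drop, hlenD]
    omega
  constructor
  · intro h
    rw [← hval]
    exact congrArg v h
  · intro h
    exact v_inj hlen (by rw [hval, h])

lemma pernum (σ : List Bool) (hσ : 0 < σ.length) (m : ℕ) :
    g σ.length (v σ) (m + 1)
      ≤ (∑ j ∈ Finset.range ((m + 1).size),
          if (List.ofFn fun t : Fin σ.length => champernowneBit (L m + j + ↑t)) = σ then 1 else 0)
    ∧ (∑ j ∈ Finset.range ((m + 1).size),
          if (List.ofFn fun t : Fin σ.length => champernowneBit (L m + j + ↑t)) = σ then 1 else 0)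
      ≤ g σ.length (v σ) (m + 1) + (σ.length - 1) := by
  set k := σ.length with hkdef
  set b := (m + 1).size with hbdef
  have hgeq : g k (v σ) (m + 1)
      = ∑ j ∈ Finset.range (b + 1 - k),
          (if (List.ofFn fun t : Fin σ.length => champernowneBit (L m + j + ↑t)) = σ
            then 1 else 0) := by
    rw [g, Finset.card_filter]
    refine Finset.sum_congr rfl fun j hj => ?_
    rw [Finset.mem_range] at hj
    have hjk : j + k ≤ b := by omega
    rw [if_congr (Iff.symm (window_iff σ m j hjk)) rfl rfl]
  rcases le_or_gt k b with hkb | hkb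
  · have hsplit : (∑ j ∈ Finset.range b,
        if (List.ofFn fun t : Fin σ.length => champernowneBit (L m + j + ↑t)) = σ
          then 1 else 0)
        = (∑ j ∈ Finset.range (b + 1 - k),
            if (List.ofFn fun t : Fin σ.length => champernowneBit (L m + j + ↑t)) = σ
              then 1 else 0)
          + ∑ j ∈ Finset.Ico (b + 1 - k) b,
              (if (List.ofFn fun t : Fin σ.length => champernowneBit (L m + j + ↑t)) = σ
                then 1 else 0) := by
      rw [Finset.range_eq_Ico, Finset.range_eq_Ico]
      exact (Finset.sum_Ico_consecutive _ (Nat.zero_le _) (by omega)).symm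
    have hrest : (∑ j ∈ Finset.Ico (b + 1 - k) b,
        if (List.ofFn fun t : Fin σ.length => champernowneBit (L m + j + ↑t)) = σ
          then 1 else 0) ≤ k - 1 := by
      calc (∑ j ∈ Finset.Ico (b + 1 - k) b,
          if (List.ofFn fun t : Fin σ.length => champernowneBit (L m + j + ↑t)) = σ
            then 1 else 0)
          ≤ ∑ _j ∈ Finset.Ico (b + 1 - k) b, 1 :=
            Finset.sum_le_sum fun j _ => by split <;> omega
        _ = k - 1 := by rw [Finset.sum_const, smul_eq_mul, mul_one, Nat.card_Ico]; omega
    constructor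
    · rw [hgeq, hsplit]; omega
    · rw [hgeq, hsplit]; omega
  · have hg0 : g k (v σ) (m + 1) = 0 := by
      rw [hgeq, show b + 1 - k = 0 by omega]
      simp
    have hb1 : 1 ≤ b := size_pos' m
    have hub : (∑ j ∈ Finset.range b,
        if (List.ofFn fun t : Fin σ.length => champernowneBit (L m + j + ↑t)) = σ
          then 1 else 0) ≤ b := by
      calc _ ≤ ∑ _j ∈ Finset.range b, 1 := Finset.sum_le_sum fun j _ => by split <;> omega
        _ = b := by simp
    constructor
    · rw [hg0]
      exact Nat.zero_le _
    · exact le_trans hub (by rw [hg0]; omega)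

lemma F_decomp (P : ℕ → Prop) [DecidablePred P] (M : ℕ) :
    (∑ i ∈ Finset.range (L M), if P i then 1 else 0)
      = ∑ m ∈ Finset.range M, ∑ j ∈ Finset.range ((m + 1).size),
          (if P (L m + j) then 1 else 0) := by
  induction M with
  | zero => simp [L_zero]
  | succ M ih =>
    rw [Finset.sum_range_succ, ← ih, Finset.range_eq_Ico,
      ← Finset.sum_Ico_consecutive _ (Nat.zero_le (L M)) (L_mono (by omega : M ≤ M + 1)),
      ← Finset.range_eq_Ico, Finset.sum_Ico_eq_sum_range,
      show L (M + 1) - L M = (M + 1).size by rw [L_succ]; omega]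

lemma master (σ : List Bool) (hσ : 0 < σ.length) (M : ℕ) (hM : 1 ≤ M) :
    |((∑ i ∈ Finset.range (L M),
        if (List.ofFn fun t : Fin σ.length => champernowneBit (i + ↑t)) = σ
          then (1:ℕ) else 0 : ℕ) : ℝ)
      - (L M : ℝ) / 2 ^ σ.length|
      ≤ (2 * σ.length) * M + 2 ^ (M.size + 2) := by
  set k := σ.length with hkdef
  set P : ℕ → Prop := fun i =>
    (List.ofFn fun t : Fin σ.length => champernowneBit (i + ↑t)) = σ with hP
  have hdec : (∑ i ∈ Finset.range (L M), if P i then (1:ℕ) else 0)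
      = ∑ m ∈ Finset.range M, ∑ j ∈ Finset.range ((m + 1).size),
          (if P (L m + j) then 1 else 0) := F_decomp P M
  have hlow : (∑ m ∈ Finset.range M, g k (v σ) (m + 1))
      ≤ ∑ i ∈ Finset.range (L M), (if P i then (1:ℕ) else 0) := by
    rw [hdec]
    exact Finset.sum_le_sum fun m _ => (pernum σ hσ m).1
  have hhigh : (∑ i ∈ Finset.range (L M), if P i then (1:ℕ) else 0)
      ≤ (∑ m ∈ Finset.range M, g k (v σ) (m + 1)) + M * (k - 1) := by
    rw [hdec]
    calc (∑ m ∈ Finset.range M, ∑ j ∈ Finset.range ((m + 1).size),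
          (if P (L m + j) then 1 else 0))
        ≤ ∑ m ∈ Finset.range M, (g k (v σ) (m + 1) + (k - 1)) :=
          Finset.sum_le_sum fun m _ => (pernum σ hσ m).2
      _ = (∑ m ∈ Finset.range M, g k (v σ) (m + 1)) + M * (k - 1) := by
          rw [Finset.sum_add_distrib, Finset.sum_const, Finset.card_range, smul_eq_mul]
  have hGr : (∑ m ∈ Finset.range M, g k (v σ) (m + 1))
      = ∑ m ∈ Finset.Ico 1 (M + 1), g k (v σ) m := by
    rw [Finset.sum_Ico_eq_sum_range]
    refine Finset.sum_congr (by rw [Nat.add_sub_cancel]) fun m _ => ?_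
    rw [Nat.add_comm 1 m]
  have htot := total_est k (v σ) (v_lt σ) M hM
  have hms := MS_est k hσ M
  set Ar : ℝ := ((∑ i ∈ Finset.range (L M), if P i then (1:ℕ) else 0 : ℕ) : ℝ) with hAr
  set Gr : ℝ := ∑ m ∈ Finset.Ico 1 (M + 1), (g k (v σ) m : ℝ) with hGrr
  set MSr : ℝ := ∑ m ∈ Finset.Ico 1 (M + 1), ((m.size + 1 - k : ℕ) : ℝ) / 2 ^ k with hMSr
  have hsum : ((∑ m ∈ Finset.Ico 1 (M + 1), g k (v σ) m : ℕ) : ℝ) = Gr := by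
    rw [hGrr]; push_cast; rfl
  have c1 : |Ar - Gr| ≤ (k : ℝ) * M := by
    rw [← hsum, ← hGr]
    have h1 : ((∑ m ∈ Finset.range M, g k (v σ) (m + 1) : ℕ) : ℝ) ≤ Ar := by
      rw [hAr]; exact_mod_cast hlow
    have h2 : Ar ≤ ((∑ m ∈ Finset.range M, g k (v σ) (m + 1) : ℕ) : ℝ)
        + (M : ℝ) * ((k - 1 : ℕ) : ℝ) := by
      rw [hAr]
      calc ((∑ i ∈ Finset.range (L M), if P i then (1:ℕ) else 0 : ℕ) : ℝ)
          ≤ (((∑ m ∈ Finset.range M, g k (v σ) (m + 1)) + M * (k - 1) : ℕ) : ℝ) := by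
            exact_mod_cast hhigh
        _ = ((∑ m ∈ Finset.range M, g k (v σ) (m + 1) : ℕ) : ℝ)
            + (M : ℝ) * ((k - 1 : ℕ) : ℝ) := by push_cast; ring
    have hkm1 : ((k - 1 : ℕ) : ℝ) ≤ (k : ℝ) := by
      have : (k - 1 : ℕ) ≤ k := by omega
      exact_mod_cast this
    have hM0 : (0:ℝ) ≤ (M : ℝ) := Nat.cast_nonneg M
    rw [abs_le]
    constructor
    · nlinarith
    · nlinarith
  have tri3 : ∀ a b c d : ℝ, |a - d| ≤ |a - b| + |b - c| + |c - d| := by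
    intro a b c d
    calc |a - d| ≤ |a - b| + |b - d| := abs_sub_le a b d
      _ ≤ |a - b| + (|b - c| + |c - d|) := by linarith [abs_sub_le b c d]
      _ = |a - b| + |b - c| + |c - d| := by ring
  refine le_trans (tri3 Ar Gr MSr ((L M : ℝ) / 2 ^ k))
    (le_trans (add_le_add (add_le_add c1 htot) hms) ?_)
  have hM0 : (0:ℝ) ≤ (M : ℝ) := Nat.cast_nonneg M
  have hk0 : (0:ℝ) ≤ (k : ℝ) := Nat.cast_nonneg k
  push_cast
  nlinarith

end ChampAux

namespace ChampAux

/-- Index of the last number whose representation ends within the first `N` bits. -/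
def mOf (N : ℕ) : ℕ := Nat.findGreatest (fun M => L M ≤ N) N

lemma mOf_le (N : ℕ) : L (mOf N) ≤ N :=
  Nat.findGreatest_spec (P := fun M => L M ≤ N) (m := 0) (Nat.zero_le N)
    (by simp [L_zero])

lemma lt_mOf (N : ℕ) : N < L (mOf N + 1) := by
  rcases le_or_gt (mOf N + 1) N with h | h
  · by_contra hc
    push_neg at hc
    exact Nat.findGreatest_is_greatest (Nat.lt_succ_self _) h hc
  · exact lt_of_lt_of_le h (le_L _)

lemma mOf_ge {M N : ℕ} (h : L M ≤ N) : M ≤ mOf N :=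
  Nat.le_findGreatest (le_trans (le_L M) h) h

lemma mOf_tendsto : Filter.Tendsto mOf Filter.atTop Filter.atTop :=
  Filter.tendsto_atTop_atTop.2 fun M => ⟨L M, fun _ hN => mOf_ge hN⟩

lemma size_tendsto : Filter.Tendsto Nat.size Filter.atTop Filter.atTop :=
  Filter.tendsto_atTop_atTop.2 fun b => ⟨2 ^ b, fun _ ha => (Nat.lt_size.2 ha).le⟩

/-- The key eventual bound. -/
lemma final_core (σ : List Bool) (hσ : 0 < σ.length) (M N : ℕ)
    (hM4 : 4 ≤ M) (hL : L M ≤ N) (hN' : N < L (M + 1)) :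
    |((∑ i ∈ Finset.range N,
        if (List.ofFn fun t : Fin σ.length => champernowneBit (i + ↑t)) = σ
          then (1:ℕ) else 0 : ℕ) : ℝ) / N - 1 / 2 ^ σ.length|
      ≤ (8 * σ.length + 48 : ℝ) / ((Nat.size M : ℝ) - 1) := by
  have hn3 : 3 ≤ Nat.size M := Nat.lt_size.2 (by omega : 2 ^ 2 ≤ M)
  have hNL : N - L M ≤ (M + 1).size := by
    rw [L_succ] at hN'
    omega
  have hsize : (M + 1).size ≤ M + 1 := Nat.size_le.2 (Nat.lt_two_pow_self)
  set FN : ℕ := ∑ i ∈ Finset.range N,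
    (if (List.ofFn fun t : Fin σ.length => champernowneBit (i + ↑t)) = σ then (1:ℕ) else 0)
    with hFNdef
  set FL : ℕ := ∑ i ∈ Finset.range (L M),
    (if (List.ofFn fun t : Fin σ.length => champernowneBit (i + ↑t)) = σ then (1:ℕ) else 0)
    with hFLdef
  have hdiff1 : FL ≤ FN ∧ FN ≤ FL + (N - L M) := by
    have hsplit : FN = FL + ∑ i ∈ Finset.Ico (L M) N,
        (if (List.ofFn fun t : Fin σ.length => champernowneBit (i + ↑t)) = σ
          then (1:ℕ) else 0) := by
      rw [hFNdef, hFLdef, Finset.range_eq_Ico,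
        ← Finset.sum_Ico_consecutive _ (Nat.zero_le (L M)) hL, ← Finset.range_eq_Ico]
    have hrest : (∑ i ∈ Finset.Ico (L M) N,
        if (List.ofFn fun t : Fin σ.length => champernowneBit (i + ↑t)) = σ
          then (1:ℕ) else 0) ≤ N - L M := by
      calc (∑ i ∈ Finset.Ico (L M) N,
            if (List.ofFn fun t : Fin σ.length => champernowneBit (i + ↑t)) = σ
              then (1:ℕ) else 0)
          ≤ ∑ _i ∈ Finset.Ico (L M) N, 1 :=
            Finset.sum_le_sum fun i _ => by split <;> omega
        _ = N - L M := by rw [Finset.sum_const, smul_eq_mul, mul_one, Nat.card_Ico]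
    omega
  have hmaster : |(FL : ℝ) - (L M : ℝ) / 2 ^ σ.length|
      ≤ (2 * σ.length : ℝ) * M + 2 ^ (Nat.size M + 2) := master σ hσ M (by omega)
  -- numeric facts
  have hMlt : M < 2 ^ Nat.size M := Nat.lt_size_self M
  have hMge : 2 ^ (Nat.size M - 1) ≤ M := Nat.lt_size.1 (by omega)
  have hLlow : 2 ^ (Nat.size M - 2) * (Nat.size M - 1) ≤ L M := L_lower M (by omega)
  have h2n2 : (2:ℕ) ^ (Nat.size M + 2) ≤ 8 * M := by
    calc (2:ℕ) ^ (Nat.size M + 2) = 2 ^ (Nat.size M - 1) * 2 ^ 3 := by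
          rw [← pow_add]
          congr 1
          omega
      _ = 8 * 2 ^ (Nat.size M - 1) := by ring
      _ ≤ 8 * M := Nat.mul_le_mul_left _ hMge
  have hLpos : 0 < L M := by
    have h1 : 0 < 2 ^ (Nat.size M - 2) * (Nat.size M - 1) :=
      Nat.mul_pos (Nat.two_pow_pos _) (by omega)
    omega
  have hNpos : 0 < N := lt_of_lt_of_le hLpos hL
  -- main chain over ℝ
  have hchain : |(FN : ℝ) - (N : ℝ) / 2 ^ σ.length| ≤ (2 * σ.length + 12 : ℝ) * M := by
    have h2k1 : (1:ℝ) ≤ 2 ^ σ.length := one_le_pow₀ (by norm_num)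
    have hd1 : |(FN : ℝ) - (FL : ℝ)| ≤ ((N - L M : ℕ) : ℝ) := by
      rw [abs_le]
      have hc1 : (FN : ℝ) ≤ (FL : ℝ) + ((N - L M : ℕ) : ℝ) := by exact_mod_cast hdiff1.2
      have hc2 : (FL : ℝ) ≤ (FN : ℝ) := by exact_mod_cast hdiff1.1
      have h0 : (0:ℝ) ≤ ((N - L M : ℕ) : ℝ) := Nat.cast_nonneg _
      constructor <;> linarith
    have hd2 : |(L M : ℝ) / 2 ^ σ.length - (N : ℝ) / 2 ^ σ.length| ≤ ((N - L M : ℕ) : ℝ) := by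
      rw [div_sub_div_same, abs_div, abs_of_pos (by positivity : (0:ℝ) < 2 ^ σ.length)]
      have hnum : |(L M : ℝ) - (N : ℝ)| = ((N - L M : ℕ) : ℝ) := by
        rw [abs_sub_comm, abs_of_nonneg]
        · rw [Nat.cast_sub hL]
        · have : (L M : ℝ) ≤ N := by exact_mod_cast hL
          linarith
      rw [hnum]
      calc ((N - L M : ℕ) : ℝ) / 2 ^ σ.length ≤ ((N - L M : ℕ) : ℝ) / 1 :=
            div_le_div_of_nonneg_left (Nat.cast_nonneg _) (by norm_num) h2k1
        _ = ((N - L M : ℕ) : ℝ) := by rw [div_one]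
    have hNLr : ((N - L M : ℕ) : ℝ) ≤ 2 * M := by
      have h1 : (N - L M : ℕ) ≤ 2 * M := by omega
      exact_mod_cast h1
    have h2nr : ((2:ℝ) ^ (Nat.size M + 2)) ≤ 8 * M := by exact_mod_cast h2n2
    have tri3 : ∀ a b c d : ℝ, |a - d| ≤ |a - b| + |b - c| + |c - d| := by
      intro a b c d
      calc |a - d| ≤ |a - b| + |b - d| := abs_sub_le a b d
        _ ≤ |a - b| + (|b - c| + |c - d|) := by linarith [abs_sub_le b c d]
        _ = |a - b| + |b - c| + |c - d| := by ring
    have hM0 : (0:ℝ) ≤ M := Nat.cast_nonneg M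
    have hk0 : (0:ℝ) ≤ σ.length := Nat.cast_nonneg σ.length
    calc |(FN : ℝ) - (N : ℝ) / 2 ^ σ.length|
        ≤ |(FN : ℝ) - (FL : ℝ)| + |(FL : ℝ) - (L M : ℝ) / 2 ^ σ.length|
          + |(L M : ℝ) / 2 ^ σ.length - (N : ℝ) / 2 ^ σ.length| :=
          tri3 (FN : ℝ) (FL : ℝ) ((L M : ℝ) / 2 ^ σ.length) ((N : ℝ) / 2 ^ σ.length)
      _ ≤ ((N - L M : ℕ) : ℝ) + ((2 * σ.length : ℝ) * M + 2 ^ (Nat.size M + 2))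
          + ((N - L M : ℕ) : ℝ) := add_le_add (add_le_add hd1 hmaster) hd2
      _ ≤ (2 * σ.length + 12 : ℝ) * M := by nlinarith
  -- divide by N
  have hNr : (0:ℝ) < N := by exact_mod_cast hNpos
  have hLr : (0:ℝ) < L M := by exact_mod_cast hLpos
  have hLNr : (L M : ℝ) ≤ N := by exact_mod_cast hL
  have hdivN : |(FN : ℝ) / N - 1 / 2 ^ σ.length| ≤ (2 * σ.length + 12 : ℝ) * M / L M := by
    have heq : (FN : ℝ) / N - 1 / 2 ^ σ.length = ((FN : ℝ) - (N : ℝ) / 2 ^ σ.length) / N := by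
      rw [sub_div]
      congr 1
      rw [div_div, mul_comm, ← div_div, div_self (ne_of_gt hNr)]
    rw [heq, abs_div, abs_of_pos hNr]
    exact div_le_div₀ (by positivity) hchain hLr hLNr
  -- M / L M ≤ 4 / (n - 1)
  have hMr : (M : ℝ) ≤ 4 * 2 ^ (Nat.size M - 2) := by
    obtain ⟨s', hs'⟩ : ∃ s', Nat.size M = s' + 2 := ⟨Nat.size M - 2, by omega⟩
    have h2 : (2:ℕ) ^ Nat.size M = 4 * 2 ^ (Nat.size M - 2) := by
      rw [hs', Nat.add_sub_cancel, pow_add]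
      ring
    have h3 : M ≤ 4 * 2 ^ (Nat.size M - 2) := by omega
    exact_mod_cast h3
  have hLr2 : (2:ℝ) ^ (Nat.size M - 2) * ((Nat.size M : ℝ) - 1) ≤ L M := by
    have hcast : ((2 ^ (Nat.size M - 2) * (Nat.size M - 1) : ℕ) : ℝ)
        = 2 ^ (Nat.size M - 2) * ((Nat.size M : ℝ) - 1) := by
      push_cast [Nat.cast_sub (by omega : 1 ≤ Nat.size M)]
      ring
    rw [← hcast]
    exact_mod_cast hLlow
  have hn1r : (1:ℝ) ≤ (Nat.size M : ℝ) - 1 := by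
    have : (3:ℝ) ≤ (Nat.size M : ℝ) := by exact_mod_cast hn3
    linarith
  have hpow2 : (0:ℝ) < (2:ℝ) ^ (Nat.size M - 2) := by positivity
  have hfinal : (2 * σ.length + 12 : ℝ) * M / L M
      ≤ (8 * σ.length + 48 : ℝ) / ((Nat.size M : ℝ) - 1) := by
    have hk0 : (0:ℝ) ≤ σ.length := Nat.cast_nonneg σ.length
    have hnum : (2 * σ.length + 12 : ℝ) * M ≤ (8 * σ.length + 48 : ℝ) * 2 ^ (Nat.size M - 2) := by
      calc (2 * σ.length + 12 : ℝ) * M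
          ≤ (2 * σ.length + 12 : ℝ) * (4 * 2 ^ (Nat.size M - 2)) :=
            mul_le_mul_of_nonneg_left hMr (by linarith)
        _ = (8 * σ.length + 48 : ℝ) * 2 ^ (Nat.size M - 2) := by ring
    calc (2 * σ.length + 12 : ℝ) * M / L M
        ≤ (8 * σ.length + 48 : ℝ) * 2 ^ (Nat.size M - 2)
            / (2 ^ (Nat.size M - 2) * ((Nat.size M : ℝ) - 1)) :=
          div_le_div₀ (by positivity) hnum (by nlinarith) hLr2
      _ = (8 * σ.length + 48 : ℝ) / ((Nat.size M : ℝ) - 1) := by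
          rw [mul_comm ((8 * σ.length + 48 : ℝ)) ((2:ℝ) ^ (Nat.size M - 2)),
            mul_div_mul_left _ _ (ne_of_gt hpow2)]
  exact le_trans hdivN hfinal

end ChampAux

open ChampAux

/-- The binary Champernowne sequence is Borel normal in base 2: every finite
binary string `σ` occurs in it with asymptotic relative frequency `2^(-|σ|)`. -/
theorem champernowne_borel_normal (σ : List Bool) :
    Tendsto
      (fun N : ℕ =>
        (((Finset.range N).filter fun i =>
          List.ofFn (fun j : Fin σ.length => champernowneBit (i + j)) = σ).card : ℝ) / N)
      atTop (nhds ((1 / 2 : ℝ) ^ σ.length)) := by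
  rcases Nat.eq_zero_or_pos σ.length with hk0 | hk
  · -- empty pattern
    have hσ : σ = [] := List.length_eq_zero_iff.1 hk0
    subst hσ
    rw [show ((1:ℝ)/2) ^ ([] : List Bool).length = 1 by simp]
    have hcard : ∀ N : ℕ, ((Finset.range N).filter fun i =>
        List.ofFn (fun j : Fin (List.length ([] : List Bool)) => champernowneBit (i + j))
          = ([] : List Bool)).card = N := by
      intro N
      rw [Finset.filter_true_of_mem, Finset.card_range]
      intro i _
      apply List.eq_nil_of_length_eq_zero
      rw [List.length_ofFn, List.length_nil]
    refine Filter.Tendsto.congr' ?_ tendsto_const_nhds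
    filter_upwards [Filter.eventually_gt_atTop 0] with N hN
    rw [hcard N]
    exact (div_self (Nat.cast_ne_zero.2 (by omega : N ≠ 0))).symm
  · -- nonempty pattern
    have hconv : Tendsto
        (fun N => (8 * σ.length + 48 : ℝ) / ((Nat.size (mOf N) : ℝ) - 1))
        atTop (nhds 0) := by
      have h1 : Tendsto (fun s : ℕ => (s : ℝ) - 1) atTop atTop := by
        simpa [sub_eq_add_neg] using
          tendsto_atTop_add_const_right atTop (-1 : ℝ) tendsto_natCast_atTop_atTop
      have h2 : Tendsto (fun s : ℕ => (8 * σ.length + 48 : ℝ) / ((s : ℝ) - 1))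
          atTop (nhds 0) := Tendsto.div_atTop tendsto_const_nhds h1
      exact h2.comp (size_tendsto.comp mOf_tendsto)
    rw [tendsto_iff_dist_tendsto_zero]
    apply squeeze_zero' (Filter.Eventually.of_forall fun N => dist_nonneg) _ hconv
    filter_upwards [Filter.eventually_ge_atTop (L 4)] with N hN
    have hM4 : 4 ≤ mOf N := mOf_ge hN
    have hfb := final_core σ hk (mOf N) N hM4 (mOf_le N) (lt_mOf N)
    rw [Real.dist_eq]
    have hcardsum : (((Finset.range N).filter fun i =>
        List.ofFn (fun j : Fin σ.length => champernowneBit (i + j)) = σ).card)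
        = ∑ i ∈ Finset.range N,
            (if (List.ofFn fun t : Fin σ.length => champernowneBit (i + ↑t)) = σ
              then (1:ℕ) else 0) := Finset.card_filter _ _
    rw [hcardsum, show ((1:ℝ)/2) ^ σ.length = 1 / 2 ^ σ.length by rw [div_pow, one_pow]]
    exact hfb
end

section
/- With respect to the fair-coin (Bernoulli 1/2) product measure on {0,1}^ℕ, the set of Borel normal sequences has measure 1: almost every sequence contains every finite binary string σ with asymptotic frequency 2^(−|σ|). -/
set_option linter.unusedSectionVars false

open MeasureTheory Filter Topology

/-- The event that `x` agrees with the list `τ` on positions `[a, a + τ.length)`. -/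
def blk (a : ℕ) (τ : List Bool) : Set (ℕ → Bool) :=
  {x | ∀ j, ∀ h : j < τ.length, x (a + j) = τ[j]}

lemma measurableSet_blk (a : ℕ) (τ : List Bool) : MeasurableSet (blk a τ) := by
  have : blk a τ = ⋂ (j : Fin τ.length), {x : ℕ → Bool | x (a + j) = τ[(j:ℕ)]} := by
    ext x
    simp only [blk, Set.mem_setOf_eq, Set.mem_iInter]
    exact ⟨fun h j => h j j.2, fun h j hj => h ⟨j, hj⟩⟩
  rw [this]
  exact MeasurableSet.iInter fun j =>
    (measurable_pi_apply _) (MeasurableSet.singleton _)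

lemma blk_set_eq (a : ℕ) (σ : List Bool) :
    {x : ℕ → Bool | List.ofFn (fun j : Fin σ.length => x (a + j)) = σ} = blk a σ := by
  ext x
  simp only [Set.mem_setOf_eq, blk]
  constructor
  · intro h j hj
    rw [List.getElem_of_eq h.symm hj, List.getElem_ofFn]
  · intro h
    conv_rhs => rw [← List.ofFn_get σ]
    rw [List.ofFn_inj]
    funext j
    exact (h j j.2).trans (by simp [List.get_eq_getElem])

variable {P : Measure (ℕ → Bool)} [IsProbabilityMeasure P]

lemma cyl0 (hP : ∀ σ : List Bool,
      P {x | List.ofFn (fun j : Fin σ.length => x j) = σ} = (1 / 2 : ENNReal) ^ σ.length)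
    (τ : List Bool) : P (blk 0 τ) = (1 / 2 : ENNReal) ^ τ.length := by
  rw [← blk_set_eq]
  have : {x : ℕ → Bool | List.ofFn (fun j : Fin τ.length => x (0 + j)) = τ}
      = {x : ℕ → Bool | List.ofFn (fun j : Fin τ.length => x j) = τ} := by
    simp only [Nat.zero_add]
  rw [this]; exact hP τ

lemma blk_eq_iUnion (a : ℕ) (τ : List Bool) :
    blk a τ = ⋃ v : Fin a → Bool, blk 0 (List.ofFn v ++ τ) := by
  ext x
  simp only [Set.mem_iUnion]
  constructor
  · intro h
    refine ⟨fun j => x j, fun j hj => ?_⟩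
    rw [Nat.zero_add]
    rcases lt_or_ge j a with hja | hja
    · rw [List.getElem_append_left (by simpa using hja), List.getElem_ofFn]
    · have hj' : j - a < τ.length := by
        simp only [List.length_append, List.length_ofFn] at hj; omega
      rw [List.getElem_append_right (by simpa using hja)]
      simp only [List.length_ofFn]
      have := h (j - a) hj'
      rwa [show a + (j - a) = j by omega] at this
  · rintro ⟨v, hv⟩ j hj
    have hj' : a + j < (List.ofFn v ++ τ).length := by
      simp [List.length_append, List.length_ofFn]; omega
    have := hv (a + j) hj'
    rw [Nat.zero_add, List.getElem_append_right (by simp)] at this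
    simpa using this

lemma pairwise_disjoint_blk (τ : List Bool) :
    Pairwise (Function.onFun Disjoint (fun v : Fin a → Bool => blk 0 (List.ofFn v ++ τ))) := by
  intro v w hvw
  rw [Function.onFun, Set.disjoint_left]
  intro x hxv hxw
  apply hvw
  funext j
  have h1 := hxv j (by simp; omega)
  have h2 := hxw j (by simp; omega)
  rw [Nat.zero_add, List.getElem_append_left (by simp [j.2]), List.getElem_ofFn] at h1 h2
  simp only [Fin.eta] at h1 h2
  rw [← h1, ← h2]

lemma getElem_idx_congr {α : Type*} (l : List α) {i j : ℕ} (h : i = j) (hi : i < l.length) :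
    l[i] = l[j]'(h ▸ hi) := by subst h; rfl

lemma two_pow_mul_half_pow (n m : ℕ) :
    ((2 ^ n : ℕ) : ENNReal) * (1 / 2 : ENNReal) ^ (n + m) = (1 / 2 : ENNReal) ^ m := by
  rw [pow_add]
  push_cast
  rw [← mul_assoc, one_div, ← mul_pow, ENNReal.mul_inv_cancel two_ne_zero ENNReal.ofNat_ne_top,
    one_pow, one_mul]

lemma cyl (hP : ∀ σ : List Bool,
      P {x | List.ofFn (fun j : Fin σ.length => x j) = σ} = (1 / 2 : ENNReal) ^ σ.length)
    (a : ℕ) (τ : List Bool) : P (blk a τ) = (1 / 2 : ENNReal) ^ τ.length := by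
  rw [blk_eq_iUnion, measure_iUnion (pairwise_disjoint_blk τ)
    (fun v => measurableSet_blk _ _), tsum_fintype]
  have : ∀ v : Fin a → Bool, P (blk 0 (List.ofFn v ++ τ)) = (1/2 : ENNReal) ^ (a + τ.length) := by
    intro v
    rw [cyl0 hP]
    simp
  simp_rw [this]
  rw [Finset.sum_const, Finset.card_univ, Fintype.card_fun, Fintype.card_bool, Fintype.card_fin,
    nsmul_eq_mul]
  exact_mod_cast two_pow_mul_half_pow a τ.length

lemma blk_inter_eq (a b : ℕ) (τ ρ : List Bool) (hab : a + τ.length ≤ b) :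
    blk a τ ∩ blk b ρ =
      ⋃ w : Fin (b - (a + τ.length)) → Bool, blk a (τ ++ (List.ofFn w ++ ρ)) := by
  set t := τ.length with ht
  set g := b - (a + t) with hg
  have hb : b = a + t + g := by omega
  ext x
  simp only [Set.mem_inter_iff, Set.mem_iUnion]
  constructor
  · rintro ⟨h1, h2⟩
    refine ⟨fun j => x (a + t + j), fun j hj => ?_⟩
    simp only [List.length_append, List.length_ofFn] at hj
    rcases lt_or_ge j t with hjt | hjt
    · rw [List.getElem_append_left (by omega : j < τ.length)]
      exact h1 j hjt
    · rw [List.getElem_append_right (by omega : τ.length ≤ j)]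
      rcases lt_or_ge (j - t) g with hjg | hjg
      · rw [List.getElem_append_left (by simpa using hjg), List.getElem_ofFn]
        simp only
        congr 1
        omega
      · rw [List.getElem_append_right (by simp only [List.length_ofFn]; omega)]
        have := h2 (j - t - g) (by omega)
        rw [show b + (j - t - g) = a + j by omega] at this
        rw [getElem_idx_congr ρ (show j - t - (List.ofFn fun j => x (a + t + ↑j)).length
          = j - t - g by simp only [List.length_ofFn])]
        exact this
  · rintro ⟨w, hw⟩
    constructor
    · intro j hj
      have := hw j (by simp only [List.length_append, List.length_ofFn]; omega)
      rwa [List.getElem_append_left (by omega : j < τ.length)] at this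
    · intro j hj
      have := hw (t + g + j) (by simp only [List.length_append, List.length_ofFn]; omega)
      rw [List.getElem_append_right (by omega : τ.length ≤ t + g + j),
        List.getElem_append_right (by simp only [List.length_ofFn]; omega)] at this
      rw [getElem_idx_congr ρ (show t + g + j - τ.length - (List.ofFn w).length = j by
        simp only [List.length_ofFn]; omega)] at this
      rw [show b + j = a + (t + g + j) by omega]
      exact this

lemma pairwise_disjoint_blk_mid (a g : ℕ) (τ ρ : List Bool) :
    Pairwise (Function.onFun Disjoint
      (fun w : Fin g → Bool => blk a (τ ++ (List.ofFn w ++ ρ)))) := by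
  intro v w hvw
  rw [Function.onFun, Set.disjoint_left]
  intro x hxv hxw
  apply hvw
  funext j
  have hlen : ∀ u : Fin g → Bool, τ.length + j < (τ ++ (List.ofFn u ++ ρ)).length := by
    intro u; simp only [List.length_append, List.length_ofFn]; omega
  have h1 := hxv (τ.length + j) (hlen v)
  have h2 := hxw (τ.length + j) (hlen w)
  rw [List.getElem_append_right (by omega : τ.length ≤ τ.length + j)] at h1 h2
  rw [List.getElem_append_left (by simp only [List.length_ofFn]; omega)] at h1
  rw [List.getElem_append_left (by simp only [List.length_ofFn]; omega)] at h2
  rw [getElem_idx_congr _ (show τ.length + (j:ℕ) - τ.length = (j:ℕ) by omega),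
    List.getElem_ofFn] at h1 h2
  simp only [Fin.eta] at h1 h2
  exact h1.symm.trans h2

lemma cyl2 (hP : ∀ σ : List Bool,
      P {x | List.ofFn (fun j : Fin σ.length => x j) = σ} = (1 / 2 : ENNReal) ^ σ.length)
    (a b : ℕ) (τ ρ : List Bool) (hab : a + τ.length ≤ b) :
    P (blk a τ ∩ blk b ρ) = (1 / 2 : ENNReal) ^ (τ.length + ρ.length) := by
  rw [blk_inter_eq a b τ ρ hab,
    measure_iUnion (pairwise_disjoint_blk_mid a _ τ ρ) (fun w => measurableSet_blk _ _),
    tsum_fintype]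
  have : ∀ w : Fin (b - (a + τ.length)) → Bool,
      P (blk a (τ ++ (List.ofFn w ++ ρ)))
        = (1/2 : ENNReal) ^ ((b - (a + τ.length)) + (τ.length + ρ.length)) := by
    intro w
    rw [cyl hP]
    congr 1
    simp only [List.length_append, List.length_ofFn]
    omega
  simp_rw [this]
  rw [Finset.sum_const, Finset.card_univ, Fintype.card_fun, Fintype.card_bool, Fintype.card_fin,
    nsmul_eq_mul]
  exact_mod_cast two_pow_mul_half_pow _ _

open ProbabilityTheory in
lemma measurable_indicator_generateFrom {Ω : Type*} (U : Set Ω) :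
    Measurable[MeasurableSpace.generateFrom {U}] (U.indicator fun _ => (1 : ℝ)) := by
  classical
  intro s hs
  rw [Set.indicator_const_preimage_eq_union]
  have hU : MeasurableSet[MeasurableSpace.generateFrom {U}] U :=
    MeasurableSpace.measurableSet_generateFrom rfl
  refine MeasurableSet.union ?_ ?_
  · split_ifs
    · exact hU
    · exact @MeasurableSet.empty _ (MeasurableSpace.generateFrom {U})
  · split_ifs
    · exact hU.compl
    · exact @MeasurableSet.empty _ (MeasurableSpace.generateFrom {U})

open ProbabilityTheory in
lemma indepFun_indicator_of_indepSet {Ω : Type*} [MeasurableSpace Ω] {μ : Measure Ω}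
    {A B : Set Ω} (h : IndepSet A B μ) :
    IndepFun (A.indicator fun _ => (1 : ℝ)) (B.indicator fun _ => (1 : ℝ)) μ :=
  indep_of_indep_of_le_left
    (indep_of_indep_of_le_right h (measurable_indicator_generateFrom B).comap_le)
    (measurable_indicator_generateFrom A).comap_le

open ProbabilityTheory in
lemma identDistrib_indicator {Ω : Type*} [MeasurableSpace Ω] {μ : Measure Ω}
    [IsProbabilityMeasure μ] {A B : Set Ω} (hA : MeasurableSet A) (hB : MeasurableSet B)
    (h : μ A = μ B) :
    IdentDistrib (A.indicator fun _ => (1 : ℝ)) (B.indicator fun _ => (1 : ℝ)) μ μ := by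
  classical
  refine ⟨(measurable_const.indicator hA).aemeasurable,
    (measurable_const.indicator hB).aemeasurable, ?_⟩
  ext s hs
  rw [Measure.map_apply (measurable_const.indicator hA) hs,
    Measure.map_apply (measurable_const.indicator hB) hs,
    Set.indicator_const_preimage_eq_union, Set.indicator_const_preimage_eq_union]
  split_ifs with h1 h0
  · simp
  · simp [h]
  · simp [measure_compl hA (measure_ne_top μ A), measure_compl hB (measure_ne_top μ B), h]
  · simp

open ProbabilityTheory in
lemma slln_blk (hP : ∀ σ : List Bool,
      P {x | List.ofFn (fun j : Fin σ.length => x j) = σ} = (1 / 2 : ENNReal) ^ σ.length)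
    (σ : List Bool) (r : ℕ) :
    ∀ᵐ x ∂P, Tendsto (fun M : ℕ => (∑ m ∈ Finset.range M,
        (blk (m * σ.length + r) σ).indicator (fun _ => (1 : ℝ)) x) / M) atTop
      (𝓝 ((1 / 2 : ℝ) ^ σ.length)) := by
  have hmeas : ∀ i : ℕ, MeasurableSet (blk i σ) := fun i => measurableSet_blk _ _
  set f : ℕ → (ℕ → Bool) → ℝ :=
    fun m => (blk (m * σ.length + r) σ).indicator (fun _ => (1 : ℝ)) with hf
  have key : ∀ m m' : ℕ, m < m' → IndepFun (f m) (f m') P := by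
    intro m m' hlt
    apply indepFun_indicator_of_indepSet
    rw [indepSet_iff_measure_inter_eq_mul (hmeas _) (hmeas _) P]
    have h1 : (m + 1) * σ.length ≤ m' * σ.length := Nat.mul_le_mul_right _ hlt
    have h2 : (m + 1) * σ.length = m * σ.length + σ.length := by ring
    rw [cyl2 hP _ _ _ _ (by omega), cyl hP, cyl hP, pow_add]
  have hInd : Pairwise (Function.onFun (IndepFun · · P) f) := by
    intro m m' hmm
    rcases hmm.lt_or_gt with hc | hc
    · exact key _ _ hc
    · exact (key _ _ hc).symm
  have hIdent : ∀ m, IdentDistrib (f m) (f 0) P P := fun m =>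
    identDistrib_indicator (hmeas _) (hmeas _) (by rw [cyl hP, cyl hP])
  have hint : Integrable (f 0) P := (integrable_const 1).indicator (hmeas _)
  have H := strong_law_ae_real f hint hInd hIdent
  have hInt0 : (∫ x, f 0 x ∂P) = (1 / 2 : ℝ) ^ σ.length := by
    rw [hf]
    rw [integral_indicator_const (1 : ℝ) (hmeas _), measureReal_def, cyl hP]
    simp [ENNReal.toReal_pow]
  rwa [hInt0] at H

open Finset

lemma tendsto_nat_div_cast (k : ℕ) (hk : 0 < k) :
    Tendsto (fun N : ℕ => ((N / k : ℕ) : ℝ) / N) atTop (𝓝 ((k : ℝ)⁻¹)) := by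
  have hmod : Tendsto (fun N : ℕ => ((N % k : ℕ) : ℝ) / N) atTop (𝓝 0) := by
    apply squeeze_zero (fun N => by positivity) (fun N => ?_)
      (tendsto_const_div_atTop_nhds_zero_nat (k : ℝ))
    gcongr
    exact_mod_cast (Nat.mod_lt _ hk).le
  have h2 : Tendsto (fun N : ℕ => (1 - ((N % k : ℕ) : ℝ) / N) / k) atTop (𝓝 ((1 - 0) / k)) :=
    (tendsto_const_nhds.sub hmod).div_const _
  have h3 : (1 - 0 : ℝ) / k = (k : ℝ)⁻¹ := by rw [sub_zero, one_div]
  rw [h3] at h2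
  apply h2.congr'
  filter_upwards [eventually_ge_atTop 1] with N hN
  have hN0 : (N : ℝ) ≠ 0 := by positivity
  have hk0 : (k : ℝ) ≠ 0 := by positivity
  have hNR : (k : ℝ) * ((N / k : ℕ) : ℝ) + ((N % k : ℕ) : ℝ) = (N : ℝ) := by
    exact_mod_cast Nat.div_add_mod N k
  field_simp
  linear_combination (-1 : ℝ) * hNR

lemma sum_blocks (k : ℕ) (u : ℕ → ℝ) (K : ℕ) :
    ∑ i ∈ range (K * k), u i = ∑ r ∈ range k, ∑ m ∈ range K, u (m * k + r) := by
  induction K with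
  | zero => simp
  | succ K ih =>
    rw [Nat.succ_mul, Finset.sum_range_add, ih]
    have : ∀ r ∈ range k, ∑ m ∈ range (K + 1), u (m * k + r)
        = (∑ m ∈ range K, u (m * k + r)) + u (K * k + r) := fun r _ => Finset.sum_range_succ _ _
    rw [Finset.sum_congr rfl this, Finset.sum_add_distrib]

lemma combine {k : ℕ} (hk : 0 < k) {c : ℝ} (u : ℕ → ℝ) (h0 : ∀ i, 0 ≤ u i)
    (hs : ∀ r, r < k → Tendsto
      (fun M : ℕ => (∑ m ∈ range M, u (m * k + r)) / M) atTop (𝓝 c)) :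
    Tendsto (fun N : ℕ => (∑ i ∈ range N, u i) / N) atTop (𝓝 c) := by
  have hKtop : Tendsto (fun N : ℕ => N / k) atTop atTop :=
    tendsto_atTop_atTop.2 fun b => ⟨b * k, fun N hN => (Nat.le_div_iff_mul_le hk).2 hN⟩
  have hsum : Tendsto (fun K : ℕ => (∑ r ∈ range k, ∑ m ∈ range K, u (m * k + r)) / K)
      atTop (𝓝 (k * c)) := by
    have h1 : Tendsto (fun K : ℕ => ∑ r ∈ range k, (∑ m ∈ range K, u (m * k + r)) / K)
        atTop (𝓝 (∑ _r ∈ range k, c)) :=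
      tendsto_finset_sum _ fun r hr => hs r (mem_range.1 hr)
    rw [Finset.sum_const, card_range, nsmul_eq_mul] at h1
    apply h1.congr fun K => (Finset.sum_div _ _ _).symm
  have hk0 : (k : ℝ) ≠ 0 := by positivity
  -- lower bound sequence
  have hL : Tendsto (fun N : ℕ => (∑ i ∈ range (N / k * k), u i) / N) atTop (𝓝 c) := by
    have hA := hsum.comp hKtop
    have h := hA.mul (tendsto_nat_div_cast k hk)
    have hlim : (k : ℝ) * c * (k : ℝ)⁻¹ = c := by field_simp
    rw [hlim] at h
    apply h.congr'
    filter_upwards [eventually_ge_atTop k] with N hN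
    have hK1 : 1 ≤ N / k := (Nat.le_div_iff_mul_le hk).2 (by omega)
    have hK0 : ((N / k : ℕ) : ℝ) ≠ 0 := by positivity
    simp only [Function.comp]
    rw [sum_blocks k u (N / k)]
    field_simp
    try ring
  have hU : Tendsto (fun N : ℕ => (∑ i ∈ range ((N / k + 1) * k), u i) / N) atTop (𝓝 c) := by
    have hA := hsum.comp ((tendsto_add_atTop_nat 1).comp hKtop)
    have hB : Tendsto (fun N : ℕ => ((N / k + 1 : ℕ) : ℝ) / N) atTop (𝓝 ((k : ℝ)⁻¹)) := by
      have := (tendsto_nat_div_cast k hk).add tendsto_one_div_atTop_nhds_zero_nat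
      rw [add_zero] at this
      apply this.congr fun N => ?_
      push_cast
      rw [add_div]
    have h := hA.mul hB
    have hlim : (k : ℝ) * c * (k : ℝ)⁻¹ = c := by field_simp
    rw [hlim] at h
    apply h.congr'
    filter_upwards [eventually_ge_atTop 1] with N hN
    have hK0 : ((N / k + 1 : ℕ) : ℝ) ≠ 0 := by positivity
    simp only [Function.comp]
    rw [sum_blocks k u (N / k + 1)]
    field_simp
    try ring
  apply tendsto_of_tendsto_of_tendsto_of_le_of_le' hL hU
  · filter_upwards [eventually_ge_atTop 1] with N hN
    gcongr
    · exact fun i _ _ => h0 i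
    · exact Nat.div_mul_le_self N k
  · filter_upwards [eventually_ge_atTop 1] with N hN
    gcongr
    · exact fun i _ _ => h0 i
    · nlinarith [Nat.div_add_mod N k, Nat.mod_lt N hk]


/-- Borel's normal number theorem on Cantor space: with respect to the
fair-coin (Bernoulli 1/2) product measure `P` on `{0,1}^ℕ` (characterized by
`P[σ] = 2^(-|σ|)` on cylinders), almost every sequence is Borel normal in
base 2: every finite string `σ` occurs with asymptotic frequency `2^(-|σ|)`. -/
theorem borel_normal_ae (P : Measure (ℕ → Bool)) [IsProbabilityMeasure P]
    (hP : ∀ σ : List Bool,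
      P {x | List.ofFn (fun j : Fin σ.length => x j) = σ} = (1 / 2 : ENNReal) ^ σ.length) :
    P {x : ℕ → Bool | ∀ σ : List Bool,
        Tendsto
          (fun N : ℕ =>
            (((Finset.range N).filter fun i =>
              List.ofFn (fun j : Fin σ.length => x (i + j)) = σ).card : ℝ) / N)
          atTop (nhds ((1 / 2 : ℝ) ^ σ.length))} = 1 := by
  classical
  set S := {x : ℕ → Bool | ∀ σ : List Bool,
        Tendsto
          (fun N : ℕ =>
            (((Finset.range N).filter fun i =>
              List.ofFn (fun j : Fin σ.length => x (i + j)) = σ).card : ℝ) / N)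
          atTop (nhds ((1 / 2 : ℝ) ^ σ.length))} with hSdef
  have main : ∀ᵐ x ∂P, ∀ (σ : List Bool) (r : ℕ),
      Tendsto (fun M : ℕ => (∑ m ∈ Finset.range M,
          (blk (m * σ.length + r) σ).indicator (fun _ => (1 : ℝ)) x) / M) atTop
        (𝓝 ((1 / 2 : ℝ) ^ σ.length)) := by
    rw [MeasureTheory.ae_all_iff]
    intro σ
    rw [MeasureTheory.ae_all_iff]
    intro r
    exact slln_blk hP σ r
  have hae : ∀ᵐ x ∂P, x ∈ S := by
    filter_upwards [main] with x hx
    simp only [hSdef, Set.mem_setOf_eq]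
    intro σ
    by_cases hk : σ.length = 0
    · have hσ : σ = [] := List.length_eq_zero_iff.1 hk
      subst hσ
      simp only [List.length_nil, pow_zero]
      refine Tendsto.congr' ?_ tendsto_const_nhds
      filter_upwards [eventually_ge_atTop 1] with N hN
      rw [Finset.filter_true_of_mem fun i _ => by simp, Finset.card_range,
        div_self (by positivity : (N : ℝ) ≠ 0)]
    · have hcard : ∀ N : ℕ, (((Finset.range N).filter fun i =>
          List.ofFn (fun j : Fin σ.length => x (i + j)) = σ).card : ℝ)
          = ∑ i ∈ Finset.range N, (blk i σ).indicator (fun _ => (1 : ℝ)) x := by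
        intro N
        rw [Finset.card_filter]
        push_cast
        refine Finset.sum_congr rfl fun i _ => ?_
        by_cases hi : x ∈ blk i σ
        · have hi' : (List.ofFn fun j : Fin σ.length => x (i + j)) = σ :=
            (Set.ext_iff.1 (blk_set_eq i σ) x).2 hi
          rw [if_pos hi', Set.indicator_of_mem hi]
        · have hi' : ¬ (List.ofFn fun j : Fin σ.length => x (i + j)) = σ :=
            fun hc => hi ((Set.ext_iff.1 (blk_set_eq i σ) x).1 hc)
          rw [if_neg hi', Set.indicator_of_notMem hi]
      have hcomb := combine (Nat.pos_of_ne_zero hk)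
        (fun i => (blk i σ).indicator (fun _ => (1 : ℝ)) x)
        (fun i => Set.indicator_nonneg (fun _ _ => zero_le_one) _)
        (fun r _ => hx σ r)
      exact hcomb.congr fun N => by rw [← hcard N]
  have h0 : P Sᶜ = 0 := by
    have := MeasureTheory.ae_iff.1 hae
    simpa [Set.compl_def] using this
  refine le_antisymm prob_le_one ?_
  calc (1 : ENNReal) = P Set.univ := measure_univ.symm
    _ ≤ P S + P Sᶜ := by
        rw [← Set.union_compl_self S]
        exact measure_union_le _ _
    _ = P S := by rw [h0, add_zero]
end

section
/- Deterministic local hidden-variable models with perfect correlation force non-contextual value assignments: suppose Λ is a set and L̂, R̂ : S × S × Λ → O are functions with L̂(a, b, λ) independent of b and R̂(a, b, λ) independent of a (local contextuality), and suppose perfect correlation holds, i.e., whenever the i-th component of Alice's setting a equals the j-th component of Bob's setting b, the i-th component of L̂(a,b,λ) equals the j-th component of R̂(a,b,λ). Then for each λ there is a single function from individual directions to outcomes that simultaneously reproduces all components of L̂ and R̂. -/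
/-- Deterministic local hidden-variable models with perfect correlation force
non-contextual value assignments. Settings are triples of distinct directions
in `D`; outcomes are triples of bits. If the response functions `L̂, R̂` are
local (Alice's outcome does not depend on Bob's setting and vice versa) and
perfectly correlated (whenever `a i = b j`, the `i`-th component of Alice's
outcome equals the `j`-th component of Bob's), then for each hidden variable
`lam` there is a single map `V : D → Bool` reproducing all components of
both `L̂` and `R̂`. -/
theorem perfect_correlation_noncontextual {D Λ : Type*} (S : Set (Fin 3 → D))
    (hS : ∀ a ∈ S, Function.Injective a)
    (Lhat Rhat : (Fin 3 → D) → (Fin 3 → D) → Λ → (Fin 3 → Bool))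
    (hlocL : ∀ a b b' lam, Lhat a b lam = Lhat a b' lam)
    (hlocR : ∀ a a' b lam, Rhat a b lam = Rhat a' b lam)
    (hcorr : ∀ a ∈ S, ∀ b ∈ S, ∀ lam (i j : Fin 3),
      a i = b j → Lhat a b lam i = Rhat a b lam j) :
    ∀ lam : Λ, ∃ V : D → Bool,
      (∀ a ∈ S, ∀ b ∈ S, ∀ i : Fin 3, Lhat a b lam i = V (a i)) ∧
      (∀ a ∈ S, ∀ b ∈ S, ∀ j : Fin 3, Rhat a b lam j = V (b j)) := by
  intro lam
  classical
  -- key: value is independent of the witness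
  have key : ∀ a ∈ S, ∀ a' ∈ S, ∀ (i i' : Fin 3), a i = a' i' →
      Lhat a a lam i = Lhat a' a' lam i' := by
    intro a ha a' ha' i i' h
    have h1 := hcorr a ha a' ha' lam i i' h
    have h2 := hcorr a' ha' a' ha' lam i' i' rfl
    have h3 : Lhat a a lam = Lhat a a' lam := hlocL a a a' lam
    have h4 : Rhat a a' lam = Rhat a' a' lam := hlocR a a' a' lam
    rw [h3, h1, h4, ← h2]
  set V : D → Bool := fun d =>
    if h : ∃ a, a ∈ S ∧ ∃ i : Fin 3, a i = d then
      Lhat h.choose h.choose lam h.choose_spec.2.choose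
    else false with hV
  have hVspec : ∀ a ∈ S, ∀ i : Fin 3, V (a i) = Lhat a a lam i := by
    intro a ha i
    have hex : ∃ a', a' ∈ S ∧ ∃ i' : Fin 3, a' i' = a i := ⟨a, ha, i, rfl⟩
    rw [hV]
    simp only [dif_pos hex]
    exact key _ hex.choose_spec.1 a ha _ i hex.choose_spec.2.choose_spec
  refine ⟨V, ?_, ?_⟩
  · intro a ha b hb i
    rw [hVspec a ha i, hlocL a b a lam]
  · intro a ha b hb j
    rw [hVspec b hb j, hcorr b hb b hb lam j j rfl, hlocR b a b lam]
end
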